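/- arXiv:2112.03797 — 5 statements merged into one kernel-verified Lean document; each statement's English description precedes it below -/
import Mathlib

section
/- Let k be a field of characteristic not 2 and (V,Q) a regular quadratic space over k of dimension 5 with orthogonal basis {e₁,...,e₅}. Let c = e₁e₂e₃e₄e₅ in the Clifford algebra. Then the subspace U of the even Clifford algebra Cliff₀(V) fixed by the canonical anti-involution equals k ⊕ c·V; in particular it has dimension 6. -/
/-!
Write elements of the Clifford algebra through blades `e_{i₁} ⋯ e_{iₘ}`. Distinct orthogonal
basis vectors anticommute and `e_i² = Q(e_i)`, so every blade is a scalar multiple of one with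
distinct indices, and the even part is spanned by such blades of length 0, 2 and 4. Reversal
multiplies a blade of `m` distinct indices by `(-1)^(m choose 2)`: it fixes lengths 0 and 4 and
negates length 2. Since `c²` is a nonzero scalar, a blade of length 4 is a multiple of `c e_l`
for the missing index `l`, and since `c` is fixed by reversal and commutes with `V`, so is
`k + c V`; hence the fixed part of `Cliff₀(V)` is `k + c V`. Finally `(a, v) ↦ a + c v` is injective: `c e_l` has no scalar part in the exterior
algebra picture, so `a = 0`, and `c` is invertible.
-/

namespace CliffordAlgebra

section Blade

variable {R M σ : Type*} [CommRing R] [AddCommGroup M] [Module R M]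
  (Q : QuadraticForm R M) (e : σ → M)

noncomputable def blade (L : List σ) : CliffordAlgebra Q :=
  (L.map fun i => ι Q (e i)).prod

variable {Q e}

@[simp] lemma blade_nil : blade Q e [] = 1 := rfl

@[simp] lemma blade_cons (i : σ) (L : List σ) :
    blade Q e (i :: L) = ι Q (e i) * blade Q e L := List.prod_cons

@[simp] lemma blade_append (L L' : List σ) :
    blade Q e (L ++ L') = blade Q e L * blade Q e L' := by
  simp [blade]

lemma reverse_blade (L : List σ) : reverse (blade Q e L) = blade Q e L.reverse := by
  simpa [blade, List.map_reverse, Function.comp_def] using reverse_prod_map_ι (Q := Q) (L.map e)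

lemma blade_mul_blade_reverse (L : List σ) :
    blade Q e L * blade Q e L.reverse = algebraMap R _ (L.map fun i => Q (e i)).prod := by
  induction L with
  | nil => simp
  | cons i L ih =>
    calc blade Q e (i :: L) * blade Q e (i :: L).reverse
        = ι Q (e i) * (blade Q e L * blade Q e L.reverse) * ι Q (e i) := by
          simp only [blade_cons, List.reverse_cons, blade_append, blade_nil, mul_one, mul_assoc]
      _ = algebraMap R _ ((i :: L).map fun i => Q (e i)).prod := by
          rw [ih, ← Algebra.commutes, mul_assoc, ι_sq_scalar, ← map_mul, List.map_cons,
            List.prod_cons, mul_comm]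

lemma blade_mem_evenOdd (L : List σ) : blade Q e L ∈ evenOdd Q L.length := by
  induction L with
  | nil => exact SetLike.one_mem_graded (evenOdd Q)
  | cons i L ih =>
    rw [blade_cons, List.length_cons, Nat.cast_succ, add_comm]
    exact SetLike.mul_mem_graded (ι_mem_evenOdd_one Q (e i)) ih

end Blade

section Orthogonal

variable {R M σ : Type*} [CommRing R] [AddCommGroup M] [Module R M]
  {Q : QuadraticForm R M} {e : σ → M}
  (horth : (QuadraticMap.polarBilin Q).IsOrthoᵢ e)
include horth

lemma ι_mul_blade_of_notMem {i : σ} {L : List σ} (hi : i ∉ L) :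
    ι Q (e i) * blade Q e L = (-1 : R) ^ L.length • (blade Q e L * ι Q (e i)) := by
  induction L with
  | nil => simp
  | cons j L ih =>
    have hij : i ≠ j := fun h => hi (h ▸ List.mem_cons_self)
    rw [blade_cons, ι_mul_ι_mul_of_isOrtho _ (QuadraticMap.isOrtho_polarBilin.mp (horth hij)),
      ih (fun h => hi (List.mem_cons_of_mem j h)), mul_smul_comm, ← neg_smul, List.length_cons,
      pow_succ, mul_neg_one, mul_assoc]

lemma blade_mul_ι_of_notMem {i : σ} {L : List σ} (hi : i ∉ L) :
    blade Q e L * ι Q (e i) = (-1 : R) ^ L.length • (ι Q (e i) * blade Q e L) := by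
  rw [ι_mul_blade_of_notMem horth hi, smul_smul, ← mul_pow, neg_one_mul, neg_neg, one_pow,
    one_smul]

lemma ι_mul_blade_append_cons {i : σ} {A : List σ} (hA : i ∉ A) (B : List σ) :
    ι Q (e i) * blade Q e (A ++ i :: B) =
      ((-1 : R) ^ A.length * Q (e i)) • blade Q e (A ++ B) := by
  rw [blade_append, blade_cons, ← mul_assoc, ι_mul_blade_of_notMem horth hA, smul_mul_assoc,
    mul_assoc, ← mul_assoc (ι Q (e i)), ι_sq_scalar, ← Algebra.smul_def, mul_smul_comm,
    smul_smul, blade_append]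

lemma commute_ι_blade_of_mem {i : σ} {L : List σ} (hL : L.Nodup) (hi : i ∈ L)
    (hodd : Odd L.length) : Commute (ι Q (e i)) (blade Q e L) := by
  obtain ⟨A, B, rfl⟩ := List.append_of_mem hi
  have hAB := List.nodup_cons.mp (List.nodup_middle.mp hL)
  have hiA : i ∉ A := fun h => hAB.1 (List.mem_append_left B h)
  have hiB : i ∉ B := fun h => hAB.1 (List.mem_append_right A h)
  have hsign : (-1 : R) ^ A.length = (-1) ^ B.length := by
    have hev : Even (A.length + B.length) := by
      obtain ⟨m, hm⟩ := hodd
      exact ⟨m, by simp only [List.length_append, List.length_cons] at hm; omega⟩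
    calc (-1 : R) ^ A.length = (-1) ^ A.length * (-1) ^ (A.length + B.length) := by
          rw [hev.neg_one_pow, mul_one]
      _ = (-1) ^ B.length := by
          rw [← pow_add, ← add_assoc, ← two_mul, pow_add, pow_mul]; norm_num
  calc ι Q (e i) * blade Q e (A ++ i :: B)
      = (-1 : R) ^ A.length • (blade Q e A * (ι Q (e i) * (ι Q (e i) * blade Q e B))) := by
        rw [blade_append, blade_cons, ← mul_assoc, ι_mul_blade_of_notMem horth hiA,
          smul_mul_assoc, mul_assoc]
    _ = blade Q e (A ++ i :: B) * ι Q (e i) := by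
        rw [hsign, ← mul_smul_comm, ← mul_smul_comm, ← blade_mul_ι_of_notMem horth hiB,
          blade_append, blade_cons, mul_assoc, mul_assoc]

lemma blade_reverse_of_nodup {L : List σ} (hL : L.Nodup) :
    blade Q e L.reverse = (-1 : R) ^ L.length.choose 2 • blade Q e L := by
  induction L with
  | nil => simp
  | cons i L ih =>
    obtain ⟨hi, hL⟩ := List.nodup_cons.mp hL
    rw [List.reverse_cons, blade_append, ih hL, smul_mul_assoc, blade_cons, blade_nil, mul_one,
      blade_mul_ι_of_notMem horth hi, smul_smul, ← pow_add, List.length_cons,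
      Nat.choose_succ_succ', Nat.choose_one_right, add_comm L.length, blade_cons]

lemma blade_mul_self_of_nodup {L : List σ} (hL : L.Nodup) :
    blade Q e L * blade Q e L =
      algebraMap R _ ((-1) ^ L.length.choose 2 * (L.map fun i => Q (e i)).prod) := by
  rw [map_mul, ← blade_mul_blade_reverse, blade_reverse_of_nodup horth hL, mul_smul_comm,
    ← Algebra.smul_def, smul_smul, ← pow_add, ← two_mul, pow_mul, neg_one_sq, one_pow,
    one_smul]

lemma exists_blade_eq_smul_blade_nodup [DecidableEq σ] (L : List σ) :
    ∃ (r : R) (L' : List σ), L'.Nodup ∧ L'.length % 2 = L.length % 2 ∧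
      (∀ a, L'.count a % 2 = L.count a % 2) ∧ blade Q e L = r • blade Q e L' := by
  induction L with
  | nil => exact ⟨1, [], List.nodup_nil, rfl, fun _ => rfl, (one_smul _ _).symm⟩
  | cons x T ih =>
    obtain ⟨r, T', hnd, hlen, hcount, hT⟩ := ih
    by_cases hx : x ∈ T'
    · obtain ⟨A, B, rfl⟩ := List.append_of_mem hx
      obtain ⟨hxAB, hAB⟩ := List.nodup_cons.mp (List.nodup_middle.mp hnd)
      refine ⟨r * ((-1) ^ A.length * Q (e x)), A ++ B, hAB, ?_, fun a => ?_, ?_⟩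
      · simp only [List.length_append, List.length_cons] at hlen ⊢
        omega
      · have := hcount a
        simp only [List.count_append, List.count_cons] at this ⊢
        split_ifs at this ⊢ <;> omega
      · rw [blade_cons, hT, mul_smul_comm,
          ι_mul_blade_append_cons horth (fun h => hxAB (List.mem_append_left B h)), smul_smul]
    · refine ⟨r, x :: T', List.nodup_cons.mpr ⟨hx, hnd⟩, ?_, fun a => ?_, ?_⟩
      · simp only [List.length_cons]
        omega
      · have := hcount a
        simp only [List.count_cons]
        split_ifs <;> omega
      · rw [blade_cons, hT, mul_smul_comm, blade_cons]

end Orthogonal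

section Exterior

variable {R M σ : Type*} [CommRing R] [AddCommGroup M] [Module R M] {e : σ → M}

lemma contractLeft_blade_eq_zero {Q : QuadraticForm R M} (d : Module.Dual R M) {L : List σ}
    (hL : ∀ i ∈ L, d (e i) = 0) : contractLeft d (blade Q e L) = 0 := by
  induction L with
  | nil => exact contractLeft_one Q d
  | cons i L ih =>
    rw [blade_cons, contractLeft_ι_mul, hL i List.mem_cons_self,
      ih fun j hj => hL j (List.mem_cons_of_mem i hj), zero_smul, mul_zero, sub_zero]

variable [Invertible (2 : R)] {Q : QuadraticForm R M}

lemma ι_injective : Function.Injective (ι Q) := fun x y h => by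
  simpa using congrArg (equivExterior Q) h

lemma equivExterior_blade (horth : (QuadraticMap.polarBilin Q).IsOrthoᵢ e) {L : List σ}
    (hL : L.Nodup) : equivExterior Q (blade Q e L) = blade 0 e L := by
  induction L with
  | nil => simp
  | cons i L ih =>
    obtain ⟨hi, hL⟩ := List.nodup_cons.mp hL
    have hB : ∀ j ∈ L, QuadraticMap.associated (R := R) (-Q) (e i) (e j) = 0 := fun j hj => by
      rw [QuadraticMap.associated_apply, ← QuadraticMap.polar, FunLike.coe_neg,
        QuadraticMap.polar_neg,
        show QuadraticMap.polar Q (e i) (e j) = 0 from horth (ne_of_mem_of_not_mem hj hi).symm,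
        neg_zero, smul_zero]
    rw [blade_cons, blade_cons, equivExterior, changeFormEquiv_apply, changeForm_ι_mul,
      ← changeFormEquiv_apply, ← equivExterior, ih hL, contractLeft_blade_eq_zero _ hB,
      sub_zero]

variable (Q) in
noncomputable def scalarPart : CliffordAlgebra Q →ₗ[R] R :=
  ExteriorAlgebra.algebraMapInv.toLinearMap ∘ₗ (equivExterior Q).toLinearMap

@[simp] lemma scalarPart_algebraMap (r : R) : scalarPart Q (algebraMap R _ r) = r := by
  simp [scalarPart, ExteriorAlgebra.algebraMapInv]

lemma scalarPart_blade_of_nodup (horth : (QuadraticMap.polarBilin Q).IsOrthoᵢ e) {L : List σ}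
    (hL : L.Nodup) (hne : L ≠ []) : scalarPart Q (blade Q e L) = 0 := by
  obtain ⟨i, L, rfl⟩ := List.exists_cons_of_ne_nil hne
  rw [scalarPart, LinearMap.comp_apply, LinearEquiv.coe_coe, equivExterior_blade horth hL,
    blade_cons, AlgHom.toLinearMap_apply, map_mul]
  simp [ExteriorAlgebra.algebraMapInv]

end Exterior

section Pseudoscalar

variable {R M : Type*} [CommRing R] [AddCommGroup M] [Module R M] {Q : QuadraticForm R M}

noncomputable def scalarAddMulι (c : CliffordAlgebra Q) : R × M →ₗ[R] CliffordAlgebra Q :=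
  (Algebra.linearMap R _).coprod (LinearMap.mulLeft R c ∘ₗ ι Q)

@[simp] lemma scalarAddMulι_apply (c : CliffordAlgebra Q) (a : R) (v : M) :
    scalarAddMulι c (a, v) = algebraMap R _ a + c * ι Q v := rfl

variable {n : ℕ}

variable (Q) in
noncomputable def pseudoscalar (e : Fin n → M) : CliffordAlgebra Q := blade Q e (List.finRange n)

lemma pseudoscalar_mul_ι_mem_evenOdd_zero {e : Fin n → M} (hn : Odd n) (v : M) :
    pseudoscalar Q e * ι Q v ∈ evenOdd Q 0 := by
  have h := SetLike.mul_mem_graded (blade_mem_evenOdd (Q := Q) (e := e) (List.finRange n))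
    (ι_mem_evenOdd_one Q v)
  have h0 : (n : ZMod 2) + 1 = 0 := by
    exact_mod_cast ZMod.natCast_eq_zero_iff_even.mpr hn.add_one
  rwa [List.length_finRange, h0] at h

variable {e : Fin n → M} (horth : (QuadraticMap.polarBilin Q).IsOrthoᵢ e)
include horth

lemma commute_ι_pseudoscalar (hn : Odd n) (i : Fin n) :
    Commute (ι Q (e i)) (pseudoscalar Q e) :=
  commute_ι_blade_of_mem horth (List.nodup_finRange n) (List.mem_finRange i) (by simpa using hn)

lemma reverse_pseudoscalar :
    reverse (pseudoscalar Q e) = (-1 : R) ^ n.choose 2 • pseudoscalar Q e := by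
  rw [pseudoscalar, reverse_blade, blade_reverse_of_nodup horth (List.nodup_finRange n),
    List.length_finRange]

lemma pseudoscalar_mul_self :
    pseudoscalar Q e * pseudoscalar Q e = algebraMap R _ ((-1) ^ n.choose 2 * ∏ i, Q (e i)) := by
  rw [pseudoscalar, blade_mul_self_of_nodup horth (List.nodup_finRange n), List.length_finRange,
    ← List.ofFn_eq_map, List.prod_ofFn]

lemma exists_pseudoscalar_mul_blade_eq_smul {L : List (Fin n)} (hL : L.Nodup) :
    ∃ (r : R) (L' : List (Fin n)), L'.Nodup ∧ (∀ a, a ∈ L' ↔ a ∉ L) ∧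
      pseudoscalar Q e * blade Q e L = r • blade Q e L' := by
  obtain ⟨r, L', hnd, -, hcount, h⟩ :=
    exists_blade_eq_smul_blade_nodup horth (List.finRange n ++ L)
  refine ⟨r, L', hnd, fun a => ?_, by rw [pseudoscalar, ← blade_append, h]⟩
  have := hcount a
  rw [List.count_append, List.count_finRange, hnd.count, hL.count] at this
  split_ifs at this <;> simp_all

end Pseudoscalar

section Field

variable {k V : Type*} [Field k] [AddCommGroup V] [Module k V] {Q : QuadraticForm k V} {n : ℕ}
  {e : Fin n → V} (horth : (QuadraticMap.polarBilin Q).IsOrthoᵢ e) (hQ : ∀ i, Q (e i) ≠ 0)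
include horth hQ

lemma exists_pseudoscalar_mul_self_eq_algebraMap :
    ∃ s : k, s ≠ 0 ∧ pseudoscalar Q e * pseudoscalar Q e = algebraMap k _ s :=
  ⟨_, mul_ne_zero (pow_ne_zero _ (neg_ne_zero.mpr one_ne_zero))
    (Finset.prod_ne_zero_iff.mpr fun i _ => hQ i), pseudoscalar_mul_self horth⟩

lemma exists_blade_eq_pseudoscalar_mul_ι {L : List (Fin n)} (hL : L.Nodup)
    (hlen : L.length + 1 = n) : ∃ v, blade Q e L = pseudoscalar Q e * ι Q v := by
  obtain ⟨r, L', hnd, hmem, hr⟩ := exists_pseudoscalar_mul_blade_eq_smul horth hL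
  have hcompl : L'.toFinset = L.toFinsetᶜ := by ext a; simp [hmem]
  obtain ⟨l, rfl⟩ : ∃ l, L' = [l] := by
    rw [← List.length_eq_one_iff, ← List.toFinset_card_of_nodup hnd, hcompl, Finset.card_compl,
      List.toFinset_card_of_nodup hL, Fintype.card_fin]
    omega
  obtain ⟨s, hs, hcc⟩ := exists_pseudoscalar_mul_self_eq_algebraMap horth hQ
  -- `c * blade L = r • e_l`; multiply by `c` once more and divide by the scalar `c²`
  have hl : blade Q e [l] = ι Q (e l) := by simp
  refine ⟨(s⁻¹ * r) • e l, ?_⟩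
  rw [map_smul, mul_smul_comm, mul_smul, ← mul_smul_comm, ← hl, ← hr, ← mul_assoc, hcc,
    ← Algebra.smul_def, smul_smul, inv_mul_cancel₀ hs, one_smul]

end Field

section Basis

variable {R M σ : Type*} [CommRing R] [AddCommGroup M] [Module R M] {Q : QuadraticForm R M}

lemma ι_eq_sum_repr [Fintype σ] (b : Module.Basis σ R M) (v : M) :
    ι Q v = ∑ i, b.repr v i • ι Q (b i) := by
  conv_lhs => rw [← b.sum_repr v]
  simp only [map_sum, map_smul]

lemma evenOdd_zero_le_span_blade [Fintype σ] (b : Module.Basis σ R M) :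
    evenOdd Q 0 ≤ Submodule.span R {x | ∃ L : List σ, Even L.length ∧ blade Q b L = x} := by
  intro x hx
  induction x, hx using even_induction with
  | algebraMap r =>
    rw [Algebra.algebraMap_eq_smul_one]
    exact Submodule.smul_mem _ r (Submodule.subset_span ⟨[], Even.zero, rfl⟩)
  | add x y _ _ hx hy => exact Submodule.add_mem _ hx hy
  | ι_mul_ι_mul m₁ m₂ x _ hx =>
    refine (Submodule.span_le.mpr ?_ :
      _ ≤ (Submodule.span R _).comap (LinearMap.mulLeft R (ι Q m₁ * ι Q m₂))) hx
    rintro _ ⟨L, hL, rfl⟩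
    rw [SetLike.mem_coe, Submodule.mem_comap, LinearMap.mulLeft_apply, ι_eq_sum_repr b m₁,
      ι_eq_sum_repr b m₂, Finset.sum_mul_sum, Finset.sum_mul]
    refine Submodule.sum_mem _ fun i _ => ?_
    rw [Finset.sum_mul]
    refine Submodule.sum_mem _ fun j _ => ?_
    rw [smul_mul_smul_comm, smul_mul_assoc]
    refine Submodule.smul_mem _ _ (Submodule.subset_span ⟨i :: j :: L, ?_, by simp [mul_assoc]⟩)
    rw [List.length_cons, List.length_cons, add_assoc]
    exact hL.add even_two

variable {n : ℕ} {b : Module.Basis (Fin n) R M} (horth : (QuadraticMap.polarBilin Q).IsOrthoᵢ b)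
include horth

lemma commute_ι_pseudoscalar_of_basis (hn : Odd n) (v : M) :
    Commute (ι Q v) (pseudoscalar Q b) := by
  suffices LinearMap.mulRight R (pseudoscalar Q b) ∘ₗ ι Q =
      LinearMap.mulLeft R (pseudoscalar Q b) ∘ₗ ι Q from LinearMap.congr_fun this v
  exact b.ext fun i => commute_ι_pseudoscalar horth hn i

lemma reverse_scalarAddMulι_pseudoscalar (hn : Odd n) (hn' : Even (n.choose 2)) (x : R × M) :
    reverse (scalarAddMulι (pseudoscalar Q b) x) = scalarAddMulι (pseudoscalar Q b) x := by
  rw [scalarAddMulι_apply, map_add, reverse.map_mul, reverse.commutes, reverse_ι,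
    reverse_pseudoscalar horth, hn'.neg_one_pow, one_smul,
    (commute_ι_pseudoscalar_of_basis horth hn x.2).eq]

lemma scalarPart_pseudoscalar_mul_ι [Invertible (2 : R)] (hn : 2 ≤ n) (v : M) :
    scalarPart Q (pseudoscalar Q b * ι Q v) = 0 := by
  suffices scalarPart Q ∘ₗ LinearMap.mulLeft R (pseudoscalar Q b) ∘ₗ ι Q = 0 from
    LinearMap.congr_fun this v
  refine b.ext fun l => ?_
  obtain ⟨r, L', hnd, hmem, h⟩ :=
    exists_pseudoscalar_mul_blade_eq_smul horth (List.nodup_singleton l)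
  have : Nontrivial (Fin n) := Fin.nontrivial_iff_two_le.mpr hn
  obtain ⟨a, ha⟩ := exists_ne l
  have hne : L' ≠ [] := List.ne_nil_of_mem ((hmem a).mpr (by simpa using ha))
  have hl : blade Q b [l] = ι Q (b l) := by simp
  rw [LinearMap.comp_apply, LinearMap.comp_apply, LinearMap.mulLeft_apply, ← hl, h, map_smul,
    scalarPart_blade_of_nodup horth hnd hne, smul_zero, LinearMap.zero_apply]

end Basis

section Injective

variable {k V : Type*} [Field k] [AddCommGroup V] [Module k V] {Q : QuadraticForm k V} {n : ℕ}
  {b : Module.Basis (Fin n) k V}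

lemma scalarAddMulι_pseudoscalar_injective [Invertible (2 : k)]
    (horth : (QuadraticMap.polarBilin Q).IsOrthoᵢ b) (hQ : ∀ i, Q (b i) ≠ 0) (hn : 2 ≤ n) :
    Function.Injective (scalarAddMulι (pseudoscalar Q b)) := by
  rw [← LinearMap.ker_eq_bot, LinearMap.ker_eq_bot']
  rintro ⟨a, v⟩ h
  rw [scalarAddMulι_apply] at h
  obtain rfl : a = 0 := by
    simpa [scalarPart_pseudoscalar_mul_ι horth hn v] using congrArg (scalarPart Q) h
  rw [map_zero, zero_add] at h
  obtain ⟨s, hs, hcc⟩ := exists_pseudoscalar_mul_self_eq_algebraMap horth hQ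
  have hsv : s • ι Q v = 0 := by rw [Algebra.smul_def, ← hcc, mul_assoc, h, mul_zero]
  have hv : ι Q v = ι Q 0 := by
    rw [map_zero]
    exact (smul_eq_zero.mp hsv).resolve_left hs
  exact Prod.ext rfl (ι_injective hv)

end Injective

section Quinary

variable {k V : Type*} [Field k] [AddCommGroup V] [Module k V] {Q : QuadraticForm k V}
  {b : Module.Basis (Fin 5) k V} (horth : (QuadraticMap.polarBilin Q).IsOrthoᵢ b)
  (hQ : ∀ i, Q (b i) ≠ 0)
include horth hQ

lemma blade_mem_range_sup_eigenspace_reverse {L : List (Fin 5)} (hL : Even L.length) :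
    blade Q b L ∈ LinearMap.range (scalarAddMulι (pseudoscalar Q b)) ⊔
      Module.End.eigenspace (reverse (Q := Q)) (-1) := by
  obtain ⟨r, L', hnd, hlen, -, h⟩ := exists_blade_eq_smul_blade_nodup horth L
  rw [h]
  refine Submodule.smul_mem _ r ?_
  have h5 : L'.length ≤ 5 := by simpa using hnd.length_le_card
  obtain h0 | h2 | h4 : L'.length = 0 ∨ L'.length = 2 ∨ L'.length = 4 := by
    obtain ⟨m, hm⟩ := hL
    omega
  · rw [List.length_eq_zero_iff.mp h0]
    exact Submodule.mem_sup_left ⟨(1, 0), by simp⟩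
  · refine Submodule.mem_sup_right (Module.End.mem_eigenspace_iff.mpr ?_)
    rw [reverse_blade, blade_reverse_of_nodup horth hnd, h2]
    norm_num
  · obtain ⟨v, hv⟩ := exists_blade_eq_pseudoscalar_mul_ι horth hQ hnd (by omega)
    exact Submodule.mem_sup_left ⟨(0, v), by simp [hv]⟩

lemma evenOdd_zero_le_range_sup_eigenspace_reverse :
    evenOdd Q 0 ≤ LinearMap.range (scalarAddMulι (pseudoscalar Q b)) ⊔
      Module.End.eigenspace (reverse (Q := Q)) (-1) :=
  (evenOdd_zero_le_span_blade b).trans <| Submodule.span_le.mpr <| by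
    rintro _ ⟨L, hL, rfl⟩
    exact blade_mem_range_sup_eigenspace_reverse horth hQ hL

lemma evenOdd_zero_inf_eigenspace_reverse_one [Invertible (2 : k)] :
    evenOdd Q 0 ⊓ Module.End.eigenspace (reverse (Q := Q)) 1 =
      LinearMap.range (scalarAddMulι (pseudoscalar Q b)) := by
  apply le_antisymm
  · intro x hx
    obtain ⟨hx, hfix⟩ := Submodule.mem_inf.mp hx
    obtain ⟨p, ⟨y, rfl⟩, m, hm, rfl⟩ :=
      Submodule.mem_sup.mp (evenOdd_zero_le_range_sup_eigenspace_reverse horth hQ hx)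
    rw [Module.End.mem_eigenspace_iff] at hfix hm
    obtain rfl : m = 0 := by
      rw [map_add, reverse_scalarAddMulι_pseudoscalar horth (by decide) (by decide), hm,
        one_smul, add_right_inj, neg_one_smul, neg_eq_iff_add_eq_zero, ← two_smul k,
        smul_eq_zero] at hfix
      exact hfix.resolve_left (Invertible.ne_zero 2)
    rw [add_zero]
    exact ⟨y, rfl⟩
  · rintro _ ⟨x, rfl⟩
    refine ⟨Submodule.add_mem _ (SetLike.algebraMap_mem_graded _ _) ?_,
      Module.End.mem_eigenspace_iff.mpr ?_⟩
    · exact pseudoscalar_mul_ι_mem_evenOdd_zero (e := ⇑b) (by decide) x.2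
    · rw [one_smul, reverse_scalarAddMulι_pseudoscalar horth (by decide) (by decide)]

end Quinary

end CliffordAlgebra

open CliffordAlgebra in
/-- Let `k` be a field of characteristic not 2 and `(V,Q)` a regular
quadratic space over `k` of dimension 5 with orthogonal basis `e₀,…,e₄`.  Let
`c = e₀e₁e₂e₃e₄` in the Clifford algebra.  Then the subspace `U` of the even Clifford
algebra fixed by the canonical anti-involution (reversal) equals `k ⊕ c·V`;
in particular it has dimension 6. -/
theorem quinary_even_clifford_fixed_points
    {k V : Type*} [Field k] [AddCommGroup V] [Module k V]
    (hchar : (2 : k) ≠ 0)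
    (Q : QuadraticForm k V)
    (hreg : ∀ x : V, (∀ y : V, QuadraticMap.polar Q x y = 0) → x = 0)
    (e : Module.Basis (Fin 5) k V)
    (horth : ∀ i j : Fin 5, i ≠ j → QuadraticMap.polar Q (e i) (e j) = 0)
    (c : CliffordAlgebra Q)
    (hc : c = CliffordAlgebra.ι Q (e 0) * CliffordAlgebra.ι Q (e 1) *
        CliffordAlgebra.ι Q (e 2) * CliffordAlgebra.ι Q (e 3) * CliffordAlgebra.ι Q (e 4)) :
    {x : CliffordAlgebra Q | x ∈ CliffordAlgebra.evenOdd Q 0 ∧ CliffordAlgebra.reverse x = x}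
      = {y : CliffordAlgebra Q | ∃ (a : k) (v : V),
          y = algebraMap k (CliffordAlgebra Q) a + c * CliffordAlgebra.ι Q v}
    ∧ Module.finrank k (Submodule.span k
        {x : CliffordAlgebra Q | x ∈ CliffordAlgebra.evenOdd Q 0 ∧
          CliffordAlgebra.reverse x = x}) = 6 := by
  have : Invertible (2 : k) := invertibleOfNonzero hchar
  have horth' : (QuadraticMap.polarBilin Q).IsOrthoᵢ e := fun i j => horth i j
  have hQ : ∀ i, Q (e i) ≠ 0 := fun i h =>
    horth'.not_isOrtho_basis_self_of_separatingLeft hreg i (by simp [QuadraticMap.polar_self, h])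
  obtain rfl : c = pseudoscalar Q e := by
    simp [hc, pseudoscalar, blade, List.finRange_succ, mul_assoc]
  have hfixed : {x | x ∈ evenOdd Q 0 ∧ reverse x = x} =
      (LinearMap.range (scalarAddMulι (pseudoscalar Q e)) : Set (CliffordAlgebra Q)) := by
    rw [← evenOdd_zero_inf_eigenspace_reverse_one horth' hQ]
    ext x
    simp
  refine ⟨hfixed.trans ?_, ?_⟩
  · ext y
    simp [eq_comm]
  · have : Module.Finite k V := Module.Finite.of_basis e
    rw [hfixed, Submodule.span_eq,
      LinearMap.finrank_range_of_inj
        (scalarAddMulι_pseudoscalar_injective horth' hQ (by norm_num)),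
      Module.finrank_prod, Module.finrank_self, Module.finrank_eq_card_basis e, Fintype.card_fin]
end

section
/- Let R ⊂ M₄(ℚ_p) be the order consisting of matrices with entries (m_{ij}) such that m_{ij} ∈ ℤ_p except m_{12}, m_{32} ∈ pⁿℤ_p, m_{24} ∈ p^{−n}ℤ_p, and m_{41}, m_{42}, m_{43} ∈ pⁿℤ_p. Then the maximal orders of M₄(ℚ_p) containing R are exactly α_m⁻¹ M₄(ℤ_p) α_m for 0 ≤ m ≤ n, where α_m = diag(1, p^m, 1, p^{m−n}). -/
open scoped Matrix

variable (p : ℕ) [Fact p.Prime] (n : ℕ)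

/-- Exponent pattern of the paramodular order of level `pⁿ`: entry `(i,j)` is required
to lie in `p^(paraExp n i j)·ℤ_p`. -/
def paraExp (i j : Fin 4) : ℤ :=
  if (i = 0 ∧ j = 1) ∨ (i = 2 ∧ j = 1) ∨ (i = 3 ∧ j = 0) ∨ (i = 3 ∧ j = 1) ∨
      (i = 3 ∧ j = 2) then (n : ℤ)
  else if i = 1 ∧ j = 3 then -(n : ℤ)
  else 0

/-- The paramodular order `R` of level `pⁿ` in `M₄(ℚ_p)`, as a set (`x ∈ p^e ℤ_p` is
expressed as `‖x‖ ≤ p^(-e)`). -/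
def paraOrder : Set (Matrix (Fin 4) (Fin 4) ℚ_[p]) :=
  {m | ∀ i j : Fin 4, ‖m i j‖ ≤ (p : ℝ) ^ (-(paraExp n i j))}

/-- An order in `M₄(ℚ_p)`: a subring which is a finitely generated `ℤ_p`-lattice
spanning `M₄(ℚ_p)` over `ℚ_p`. -/
def IsOrder (O : Subring (Matrix (Fin 4) (Fin 4) ℚ_[p])) : Prop :=
  (∀ (c : ℤ_[p]) (x : Matrix (Fin 4) (Fin 4) ℚ_[p]), x ∈ O → c • x ∈ O)
  ∧ (∃ S : Finset (Matrix (Fin 4) (Fin 4) ℚ_[p]), (∀ x ∈ S, x ∈ O) ∧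
      ∀ x ∈ O, x ∈ Submodule.span ℤ_[p] (↑S : Set (Matrix (Fin 4) (Fin 4) ℚ_[p])))
  ∧ Submodule.span ℚ_[p] (↑O : Set (Matrix (Fin 4) (Fin 4) ℚ_[p])) = ⊤

/-- A maximal order in `M₄(ℚ_p)`. -/
def IsMaximalOrder (O : Subring (Matrix (Fin 4) (Fin 4) ℚ_[p])) : Prop :=
  IsOrder p O ∧ ∀ O' : Subring (Matrix (Fin 4) (Fin 4) ℚ_[p]),
    IsOrder p O' → O ≤ O' → O' = O

/-- `α_m = diag(1, p^m, 1, p^(m−n))`. -/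
noncomputable def alphaMat (m : ℕ) : Matrix (Fin 4) (Fin 4) ℚ_[p] :=
  Matrix.diagonal ![1, (p : ℚ_[p]) ^ (m : ℤ), 1, (p : ℚ_[p]) ^ ((m : ℤ) - (n : ℤ))]

/-! For `e : ι → ℤ` the order `Λ(e) = diag(pᵉ)⁻¹ M(ℤ_p) diag(pᵉ)` consists of the matrices
with `v(x i j) ≥ e j - e i`. An order `O` containing the diagonal idempotents `E i i` contains
`x i j • E i j` for each of its elements `x`. Choose in each column `j` an element `w j • E 0 j`
of `O` of largest norm (it exists since a finitely generated `O` has bounded entries). The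
products `(w i • E 0 i) * (x i j • E i j) ∈ O` give `v(x i j) ≥ v(w j) - v(w i)`, so
`O ⊆ Λ(v ∘ w)`. When `O ⊇ R`, also `R ⊆ Λ(v ∘ w)`, and the generators of `R` force the
differences of `v ∘ w` to be those of the exponents of `α_m` for some `0 ≤ m ≤ n`. Maximality
then gives `O = α_m⁻¹ M₄(ℤ_p) α_m`; conversely these orders contain `R` and are pairwise
incomparable, hence maximal. -/

open Matrix

lemma one_lt_prime_real : (1 : ℝ) < p := by exact_mod_cast (Fact.out : p.Prime).one_lt

lemma prime_real_ne_zero : (p : ℝ) ≠ 0 := by exact_mod_cast (Fact.out : p.Prime).ne_zero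

lemma padic_prime_ne_zero : (p : ℚ_[p]) ≠ 0 := by
  exact_mod_cast (Fact.out : p.Prime).ne_zero

lemma prime_zpow_pos (k : ℤ) : 0 < (p : ℝ) ^ k :=
  zpow_pos (zero_lt_one.trans (one_lt_prime_real p)) k

lemma Padic.exists_norm_max (s : Set ℚ_[p]) (hbdd : ∃ K, ∀ a ∈ s, ‖a‖ ≤ K)
    (hne : ∃ a ∈ s, a ≠ 0) : ∃ a ∈ s, a ≠ 0 ∧ ∀ b ∈ s, ‖b‖ ≤ ‖a‖ := by
  obtain ⟨K, hK⟩ := hbdd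
  obtain ⟨N, hN⟩ := pow_unbounded_of_one_lt K (one_lt_prime_real p)
  have hlow : ∀ v : ℤ, (∃ a ∈ s, a ≠ 0 ∧ a.valuation = v) → -(N : ℤ) ≤ v := by
    rintro v ⟨a, ha, ha0, rfl⟩
    have : (p : ℝ) ^ (-a.valuation) < (p : ℝ) ^ (N : ℤ) := by
      rw [← Padic.norm_eq_zpow_neg_valuation ha0, zpow_natCast]
      exact (hK a ha).trans_lt hN
    have := (zpow_lt_zpow_iff_right₀ (one_lt_prime_real p)).mp this
    omega
  obtain ⟨a₀, ha₀, ha₀0⟩ := hne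
  obtain ⟨-, ⟨a, ha, ha0, rfl⟩, hleast⟩ :=
    Int.exists_least_of_bdd ⟨_, hlow⟩ ⟨_, a₀, ha₀, ha₀0, rfl⟩
  refine ⟨a, ha, ha0, fun b hb => ?_⟩
  rcases eq_or_ne b 0 with rfl | hb0
  · simp
  rw [Padic.norm_eq_zpow_neg_valuation ha0, Padic.norm_eq_zpow_neg_valuation hb0]
  exact zpow_le_zpow_right₀ (one_lt_prime_real p).le
    (neg_le_neg (hleast _ ⟨b, hb, hb0, rfl⟩))

lemma PadicInt.norm_smul_le (c : ℤ_[p]) (q : ℚ_[p]) : ‖c • q‖ ≤ ‖q‖ := by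
  rw [Algebra.smul_def, norm_mul]
  exact mul_le_of_le_one_left (norm_nonneg q) c.norm_le_one

section Lattices

variable {ι : Type*}

def boundedEntries (A : ι → ι → ℤ) : Set (Matrix ι ι ℚ_[p]) :=
  {x | ∀ i j, ‖x i j‖ ≤ (p : ℝ) ^ A i j}

lemma norm_entry_le_of_mem_span {S : Set (Matrix ι ι ℚ_[p])} {K : ℝ} (hK : 0 ≤ K)
    (hS : ∀ s ∈ S, ∀ i j, ‖s i j‖ ≤ K) {x : Matrix ι ι ℚ_[p]}
    (hx : x ∈ Submodule.span ℤ_[p] S) (i j : ι) : ‖x i j‖ ≤ K := by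
  induction hx using Submodule.span_induction generalizing i j with
  | mem s hs => exact hS s hs i j
  | zero => simpa using hK
  | add x y _ _ hx hy => exact (Padic.nonarchimedean _ _).trans (max_le (hx i j) (hy i j))
  | smul c x _ hx => exact (PadicInt.norm_smul_le p c _).trans (hx i j)

variable [DecidableEq ι]

lemma single_mem_boundedEntries {A : ι → ι → ℤ} {i j : ι} {c : ℚ_[p]}
    (hc : ‖c‖ ≤ (p : ℝ) ^ A i j) : single i j c ∈ boundedEntries p A := by
  intro a b
  by_cases h : i = a ∧ j = b
  · obtain ⟨rfl, rfl⟩ := h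
    simpa using hc
  · rw [single_apply_of_ne _ _ _ _ _ h, norm_zero]
    positivity

lemma boundedEntries_subset_iff {A B : ι → ι → ℤ} :
    boundedEntries p A ⊆ boundedEntries p B ↔ A ≤ B := by
  refine ⟨fun h i j => ?_, fun h x hx i j =>
    (hx i j).trans (zpow_le_zpow_right₀ (one_lt_prime_real p).le (h i j))⟩
  have hmem := h (single_mem_boundedEntries p (c := (p : ℚ_[p]) ^ (-A i j))
    (by rw [Padic.norm_p_zpow, neg_neg])) i j
  rw [single_apply_same, Padic.norm_p_zpow, neg_neg] at hmem
  exact (zpow_le_zpow_iff_right₀ (one_lt_prime_real p)).mp hmem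

noncomputable def diagConjOrderGen (e : ι → ℤ) (ij : ι × ι) : Matrix ι ι ℚ_[p] :=
  single ij.1 ij.2 ((p : ℚ_[p]) ^ (e ij.2 - e ij.1))

lemma single_eq_smul_diagConjOrderGen (e : ι → ℤ) (i j : ι) (a : ℚ_[p]) :
    single i j a = (a * (p : ℚ_[p]) ^ (e i - e j)) • diagConjOrderGen p e (i, j) := by
  rw [diagConjOrderGen, smul_single, smul_eq_mul, mul_assoc, ← zpow_add₀ (padic_prime_ne_zero p)]
  simp

variable [Fintype ι]

def diagConjOrder (e : ι → ℤ) : Subring (Matrix ι ι ℚ_[p]) where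
  carrier := boundedEntries p fun i j => e i - e j
  zero_mem' i j := by rw [Matrix.zero_apply, norm_zero]; positivity
  one_mem' i j := by
    rcases eq_or_ne i j with rfl | hij
    · simp
    · rw [one_apply_ne hij, norm_zero]; positivity
  add_mem' ha hb i j := (Padic.nonarchimedean _ _).trans (max_le (ha i j) (hb i j))
  neg_mem' ha i j := by simpa using ha i j
  mul_mem' {a b} ha hb i j := by
    rw [mul_apply]
    refine IsUltrametricDist.norm_sum_le_of_forall_le_of_nonneg (prime_zpow_pos p _).le
      fun k _ => ?_
    calc ‖a i k * b k j‖ ≤ (p : ℝ) ^ (e i - e k) * (p : ℝ) ^ (e k - e j) := by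
          rw [norm_mul]; exact mul_le_mul (ha i k) (hb k j) (norm_nonneg _) (prime_zpow_pos p _).le
      _ = (p : ℝ) ^ (e i - e j) := by
          rw [← zpow_add₀ (prime_real_ne_zero p)]; ring_nf

lemma coe_diagConjOrder_eq_image (e : ι → ℤ) :
    (diagConjOrder p e : Set (Matrix ι ι ℚ_[p])) =
      (fun x => (diagonal fun i => (p : ℚ_[p]) ^ e i)⁻¹ * x *
        diagonal fun i => (p : ℚ_[p]) ^ e i) '' {x | ∀ i j, ‖x i j‖ ≤ 1} := by
  set D := diagonal fun i => (p : ℚ_[p]) ^ e i with hD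
  set D' := diagonal fun i => (p : ℚ_[p]) ^ (-e i) with hD'
  have hD'D : D' * D = 1 := by
    rw [diagonal_mul_diagonal, ← diagonal_one]
    congr 1; funext i; rw [← zpow_add₀ (padic_prime_ne_zero p), neg_add_cancel, zpow_zero]
  have hDD' : D * D' = 1 := by
    rw [diagonal_mul_diagonal, ← diagonal_one]
    congr 1; funext i; rw [← zpow_add₀ (padic_prime_ne_zero p), add_neg_cancel, zpow_zero]
  rw [inv_eq_left_inv hD'D, Set.image_eq_preimage_of_inverse (f := fun x => D' * x * D)
    (g := fun y => D * y * D')]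
  · ext y
    refine forall₂_congr fun i j => ?_
    have hconj : (p : ℝ) ^ (-e i) * ‖y i j‖ * (p : ℝ) ^ (-(-e j)) =
        ‖y i j‖ / (p : ℝ) ^ (e i - e j) := by
      rw [zpow_sub₀ (prime_real_ne_zero p), neg_neg, _root_.zpow_neg]
      field_simp
    change _ ↔ ‖(D * y * D') i j‖ ≤ 1
    rw [hD, hD', mul_diagonal, diagonal_mul, norm_mul, norm_mul, Padic.norm_p_zpow,
      Padic.norm_p_zpow, hconj, div_le_one (prime_zpow_pos p _)]
  · intro x; simp only [← mul_assoc, hDD', one_mul]; rw [mul_assoc, hDD', mul_one]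
  · intro x; simp only [← mul_assoc, hD'D, one_mul]; rw [mul_assoc, hD'D, mul_one]

lemma smul_mem_diagConjOrder {e : ι → ℤ} (c : ℤ_[p]) {x : Matrix ι ι ℚ_[p]}
    (hx : x ∈ diagConjOrder p e) : c • x ∈ diagConjOrder p e := fun i j =>
  (PadicInt.norm_smul_le p c (x i j)).trans (hx i j)

lemma diagConjOrderGen_mem (e : ι → ℤ) (ij : ι × ι) :
    diagConjOrderGen p e ij ∈ diagConjOrder p e :=
  single_mem_boundedEntries p (by rw [Padic.norm_p_zpow, neg_sub])

lemma mem_span_diagConjOrderGen {e : ι → ℤ} {x : Matrix ι ι ℚ_[p]}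
    (hx : x ∈ diagConjOrder p e) :
    x ∈ Submodule.span ℤ_[p] (Set.range (diagConjOrderGen p e)) := by
  rw [matrix_eq_sum_single x]
  refine Submodule.sum_mem _ fun i _ => Submodule.sum_mem _ fun j _ => ?_
  have hc : ‖x i j * (p : ℚ_[p]) ^ (e i - e j)‖ ≤ 1 := by
    rw [norm_mul, Padic.norm_p_zpow, ← le_div_iff₀ (prime_zpow_pos p _), one_div,
      ← _root_.zpow_neg, neg_neg]
    exact hx i j
  rw [single_eq_smul_diagConjOrderGen p e]
  exact Submodule.smul_mem _ (show ℤ_[p] from ⟨_, hc⟩) (Submodule.subset_span ⟨(i, j), rfl⟩)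

lemma span_diagConjOrder_eq_top (e : ι → ℤ) :
    Submodule.span ℚ_[p] (diagConjOrder p e : Set (Matrix ι ι ℚ_[p])) = ⊤ := by
  refine Submodule.eq_top_iff'.mpr fun x => ?_
  rw [matrix_eq_sum_single x]
  refine Submodule.sum_mem _ fun i _ => Submodule.sum_mem _ fun j _ => ?_
  rw [single_eq_smul_diagConjOrderGen p e]
  exact Submodule.smul_mem _ _ (Submodule.subset_span (diagConjOrderGen_mem p e (i, j)))

lemma single_entry_mem {O : Subring (Matrix ι ι ℚ_[p])} (hdiag : ∀ i, single i i 1 ∈ O)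
    {x : Matrix ι ι ℚ_[p]} (hx : x ∈ O) (i j : ι) : single i j (x i j) ∈ O := by
  simpa using O.mul_mem (O.mul_mem (hdiag i) hx) (hdiag j)

lemma le_diagConjOrder_of_row_max {O : Subring (Matrix ι ι ℚ_[p])}
    (hdiag : ∀ i, single i i 1 ∈ O) {i₀ : ι} {w : ι → ℚ_[p]} (hw0 : ∀ j, w j ≠ 0)
    (hwO : ∀ j, single i₀ j (w j) ∈ O) (hmax : ∀ x ∈ O, ∀ j, ‖x i₀ j‖ ≤ ‖w j‖) :
    O ≤ diagConjOrder p fun j => (w j).valuation := by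
  intro x hx i j
  have hprod : single i₀ j (w i * x i j) ∈ O := by
    simpa using O.mul_mem (hwO i) (single_entry_mem p hdiag hx i j)
  have h := hmax _ hprod j
  rw [single_apply_same, norm_mul, Padic.norm_eq_zpow_neg_valuation (hw0 i),
    Padic.norm_eq_zpow_neg_valuation (hw0 j), ← le_div_iff₀' (prime_zpow_pos p _),
    ← zpow_sub₀ (prime_real_ne_zero p), neg_sub_neg] at h
  exact h

lemma exists_le_diagConjOrder {O : Subring (Matrix ι ι ℚ_[p])}
    (hdiag : ∀ i, single i i 1 ∈ O) (hbdd : ∃ K, ∀ x ∈ O, ∀ i j, ‖x i j‖ ≤ K) (i₀ : ι)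
    (hrow : ∀ j, ∃ x ∈ O, x i₀ j ≠ 0) : ∃ e : ι → ℤ, O ≤ diagConjOrder p e := by
  obtain ⟨K, hK⟩ := hbdd
  have hmax : ∀ j, ∃ x ∈ O, x i₀ j ≠ 0 ∧ ∀ y ∈ O, ‖y i₀ j‖ ≤ ‖x i₀ j‖ := fun j => by
    obtain ⟨-, ⟨x, hx, rfl⟩, hx0, hmax⟩ :=
      Padic.exists_norm_max p ((fun x : Matrix ι ι ℚ_[p] => x i₀ j) '' (O : Set _))
        ⟨K, by rintro - ⟨x, hx, rfl⟩; exact hK x hx i₀ j⟩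
        (by obtain ⟨x, hx, hx0⟩ := hrow j; exact ⟨_, ⟨x, hx, rfl⟩, hx0⟩)
    exact ⟨x, hx, hx0, fun y hy => hmax _ ⟨y, hy, rfl⟩⟩
  choose x hxO hx0 hxmax using hmax
  exact ⟨_, le_diagConjOrder_of_row_max p hdiag hx0
    (fun j => single_entry_mem p hdiag (hxO j) i₀ j) fun y hy j => hxmax j y hy⟩

end Lattices

lemma isOrder_diagConjOrder (e : Fin 4 → ℤ) : IsOrder p (diagConjOrder p e) := by
  classical
  refine ⟨fun c x hx => smul_mem_diagConjOrder p c hx,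
    ⟨Finset.univ.image (diagConjOrderGen p e), ?_, fun x hx => ?_⟩, span_diagConjOrder_eq_top p e⟩
  · intro x hx
    obtain ⟨ij, -, rfl⟩ := Finset.mem_image.mp hx
    exact diagConjOrderGen_mem p e ij
  · simpa using mem_span_diagConjOrderGen p hx

lemma IsOrder.exists_norm_entry_le {O : Subring (Matrix (Fin 4) (Fin 4) ℚ_[p])}
    (hO : IsOrder p O) : ∃ K, ∀ x ∈ O, ∀ i j, ‖x i j‖ ≤ K := by
  obtain ⟨-, ⟨S, -, hspan⟩, -⟩ := hO
  obtain ⟨K, hK⟩ :=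
    Finite.exists_le fun t : S × Fin 4 × Fin 4 => ‖(t.1 : Matrix (Fin 4) (Fin 4) ℚ_[p]) t.2.1 t.2.2‖
  refine ⟨max K 0, fun x hx => norm_entry_le_of_mem_span p (le_max_right _ _) ?_ (hspan x hx)⟩
  intro s hs i j
  exact (hK ⟨⟨s, hs⟩, i, j⟩).trans (le_max_left _ _)

def alphaExp (m : ℕ) : Fin 4 → ℤ := ![0, m, 0, (m : ℤ) - n]

lemma alphaMat_eq_diagonal (m : ℕ) :
    alphaMat p n m = diagonal fun i => (p : ℚ_[p]) ^ alphaExp n m i := by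
  rw [alphaMat]
  congr 1
  funext i
  fin_cases i <;> simp [alphaExp]

lemma single_mem_paraOrder (i j : Fin 4) :
    single i j ((p : ℚ_[p]) ^ paraExp n i j) ∈ paraOrder p n :=
  single_mem_boundedEntries p (Padic.norm_p_zpow _).le

lemma single_one_mem_paraOrder (i : Fin 4) : single i i 1 ∈ paraOrder p n := by
  have hdiag : paraExp n i i = 0 := by fin_cases i <;> simp [paraExp]
  simpa [hdiag] using single_mem_paraOrder p n i i

/-- The entries of `R` at `(0,2), (2,0)` give `e 0 = e 2`, those at `(1,3), (3,1)` give
`e 3 = e 1 - n`, and those at `(0,1), (1,0)` give `0 ≤ e 1 - e 0 ≤ n`. -/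
lemma exists_alphaExp_of_neg_paraExp_le {e : Fin 4 → ℤ}
    (h : (fun i j => -paraExp n i j) ≤ fun i j => e i - e j) :
    ∃ m ≤ n, (fun i j => e i - e j) = fun i j => alphaExp n m i - alphaExp n m j := by
  have h01 := h 0 1; have h10 := h 1 0; have h02 := h 0 2
  have h20 := h 2 0; have h13 := h 1 3; have h31 := h 3 1
  simp [paraExp] at h01 h10 h02 h20 h13 h31
  refine ⟨(e 1 - e 0).toNat, by omega, ?_⟩
  funext i j
  fin_cases i <;> fin_cases j <;> simp [alphaExp] <;> omega

lemma neg_paraExp_le_alphaExp {m : ℕ} (hm : m ≤ n) :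
    (fun i j => -paraExp n i j) ≤ fun i j => alphaExp n m i - alphaExp n m j := by
  intro i j
  fin_cases i <;> fin_cases j <;> simp [paraExp, alphaExp] <;> omega

lemma paraOrder_subset_diagConjOrder {m : ℕ} (hm : m ≤ n) :
    paraOrder p n ⊆ diagConjOrder p (alphaExp n m) :=
  (boundedEntries_subset_iff p).mpr (neg_paraExp_le_alphaExp n hm)

lemma eq_of_diagConjOrder_alphaExp_le {m m' : ℕ}
    (h : diagConjOrder p (alphaExp n m) ≤ diagConjOrder p (alphaExp n m')) : m = m' := by
  have hle := (boundedEntries_subset_iff p).mp h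
  have h01 := hle 0 1
  have h10 := hle 1 0
  simp [alphaExp] at h01 h10
  omega

lemma exists_le_diagConjOrder_alphaExp {O : Subring (Matrix (Fin 4) (Fin 4) ℚ_[p])}
    (hO : IsOrder p O) (hR : paraOrder p n ⊆ O) :
    ∃ m ≤ n, O ≤ diagConjOrder p (alphaExp n m) := by
  have hdiag i : single i i 1 ∈ O := hR (single_one_mem_paraOrder p n i)
  obtain ⟨e, he⟩ := exists_le_diagConjOrder p hdiag hO.exists_norm_entry_le 0 fun j =>
    ⟨_, hR (single_mem_paraOrder p n 0 j), by simpa using zpow_ne_zero _ (padic_prime_ne_zero p)⟩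
  obtain ⟨m, hmn, hem⟩ := exists_alphaExp_of_neg_paraExp_le n
    ((boundedEntries_subset_iff p).mp (hR.trans he))
  refine ⟨m, hmn, fun x hx => ?_⟩
  have hx' : x ∈ boundedEntries p fun i j => e i - e j := he hx
  rwa [hem] at hx'

/-- The maximal orders of `M₄(ℚ_p)` containing the paramodular order
`R` of level `pⁿ` are exactly `α_m⁻¹ M₄(ℤ_p) α_m` for `0 ≤ m ≤ n`. -/
theorem maximal_orders_containing_paramodular (O : Subring (Matrix (Fin 4) (Fin 4) ℚ_[p])) :
    (IsMaximalOrder p O ∧ paraOrder p n ⊆ ↑O)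
      ↔ ∃ m : ℕ, m ≤ n ∧ (↑O : Set (Matrix (Fin 4) (Fin 4) ℚ_[p]))
          = (fun x => (alphaMat p n m)⁻¹ * x * alphaMat p n m) ''
              {x : Matrix (Fin 4) (Fin 4) ℚ_[p] | ∀ i j, ‖x i j‖ ≤ 1} := by
  simp only [alphaMat_eq_diagonal, ← coe_diagConjOrder_eq_image, SetLike.coe_set_eq]
  constructor
  · rintro ⟨⟨hO, hmax⟩, hR⟩
    obtain ⟨m, hmn, hle⟩ := exists_le_diagConjOrder_alphaExp p n hO hR
    exact ⟨m, hmn, (hmax _ (isOrder_diagConjOrder p _) hle).symm⟩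
  · rintro ⟨m, hmn, rfl⟩
    refine ⟨⟨isOrder_diagConjOrder p _, fun O' hO' hle => ?_⟩,
      paraOrder_subset_diagConjOrder p n hmn⟩
    obtain ⟨m', -, hle'⟩ :=
      exists_le_diagConjOrder_alphaExp p n hO' ((paraOrder_subset_diagConjOrder p n hmn).trans hle)
    obtain rfl := eq_of_diagConjOrder_alphaExp_le p n (hle.trans hle')
    exact le_antisymm hle' hle
end

section
/- The normaliser in GL₄(ℚ_p) of the paramodular order R of level pⁿ, i.e. {g ∈ GL₄(ℚ_p) : g⁻¹Rg = R}, equals the union over μ ∈ {0,1} of p^ℤ · W_{pⁿ}^μ · R^×, where W_{pⁿ} = [[0,pⁿ,0,0],[1,0,0,0],[0,0,0,1],[0,0,pⁿ,0]]. -/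
open scoped Matrix

variable (p : ℕ) [Fact p.Prime] (n : ℕ)

/-- The Atkin-Lehner matrix `W_{pⁿ}`. -/
noncomputable def WMat : Matrix (Fin 4) (Fin 4) ℚ_[p] :=
  !![0, (p : ℚ_[p])^n, 0, 0; 1, 0, 0, 0; 0, 0, 0, 1; 0, 0, (p : ℚ_[p])^n, 0]

/-!
For `w : Fin 4 → ℤ` let `L_w` be the lattice of row vectors `v` with `‖v i‖ ≤ p ^ w i`. With
`c = (0, -n, 0, 0)` and `d = (0, 0, 0, n)`, `R = End(L_c) ∩ End(L_d)`, and the diagonal lattices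
stable under `R` are the `L_k` with `k = (x, x - t, x, x - t + n)`, `0 ≤ t ≤ n`: up to scaling, a
chain running from `L_d` (`t = 0`) to `L_c` (`t = n`).

If `g` normalises `R`, right multiplication by `g⁻¹` permutes these lattices; it preserves
inclusions and intersections, and it multiplies every covolume by the same factor. Following
`L_c`, `L_d` and `L_d ∩ p⁻¹L_c` under this map shows that it sends `L_c` and `L_d` to scalar
multiples of `L_c` and `L_d`, or of `L_d` and `L_c`. In the first case a power of `p` times `g`
stabilises both lattices, i.e. lies in `R^×`; in the second case the same holds for `W g`, since
`W` exchanges `L_c` and `L_d` up to scaling. Conversely, `p`, `R^×` and `W` (as `W² = pⁿ`)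
normalise `R`.
-/

lemma prod_zpow_eq_zpow_sum₀ {ι G₀ : Type*} [CommGroupWithZero G₀] {a : G₀} (ha : a ≠ 0)
    (s : Finset ι) (f : ι → ℤ) : ∏ i ∈ s, a ^ f i = a ^ ∑ i ∈ s, f i := by
  induction s using Finset.cons_induction with
  | empty => simp
  | cons i s hi ih => rw [Finset.prod_cons, Finset.sum_cons, ih, zpow_add₀ ha]

section Stabilizer

open Pointwise ConjAct

lemma toConjAct_mem_stabilizer_iff {M : Type*} [Monoid M] {S : Set M} {U : Mˣ} :
    toConjAct U ∈ MulAction.stabilizer (ConjAct Mˣ) S ↔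
      (∀ x ∈ S, ↑U * x * ↑U⁻¹ ∈ S) ∧ ∀ x ∈ S, ↑U⁻¹ * x * ↑U ∈ S := by
  rw [MulAction.mem_stabilizer_iff, subset_antisymm_iff, Set.subset_smul_set_iff,
    Set.smul_set_subset_iff, Set.smul_set_subset_iff]
  simp [units_smul_def]

lemma toConjAct_map_algebraMap_mem_stabilizer {R A : Type*} [CommSemiring R] [Semiring A]
    [Algebra R A] (S : Set A) (c : Rˣ) :
    toConjAct (Units.map (algebraMap R A : R →* A) c) ∈ MulAction.stabilizer (ConjAct Aˣ) S := by
  have hcentral (d : Rˣ) (x : A) : ↑(Units.map (algebraMap R A : R →* A) d) * x *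
      ↑(Units.map (algebraMap R A : R →* A) d⁻¹) = x := by
    simp [Algebra.commutes, mul_assoc, ← map_mul]
  refine toConjAct_mem_stabilizer_iff.2 ⟨fun x hx => ?_, fun x hx => ?_⟩
  · rwa [← map_inv, hcentral]
  · simpa [← map_inv] using (hcentral c⁻¹ x).symm ▸ hx

lemma isUnit_and_conj_image_eq_iff {ι R : Type*} [Fintype ι] [DecidableEq ι] [CommRing R]
    {S : Set (Matrix ι ι R)} {g : Matrix ι ι R} :
    (IsUnit g ∧ (fun x => g⁻¹ * x * g) '' S = S) ↔ ∃ U : (Matrix ι ι R)ˣ,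
      ↑U = g ∧ toConjAct U ∈ MulAction.stabilizer (ConjAct (Matrix ι ι R)ˣ) S := by
  have himage (U : (Matrix ι ι R)ˣ) :
      (fun x => (U : Matrix ι ι R)⁻¹ * x * U) '' S = toConjAct U⁻¹ • S := by
    rw [← Set.image_smul]
    congr 1
    funext x
    rw [units_smul_def, ofConjAct_toConjAct, inv_inv, Matrix.coe_units_inv]
  constructor
  · rintro ⟨⟨U, rfl⟩, h⟩
    refine ⟨U, rfl, ?_⟩
    rw [← inv_mem_iff, ← toConjAct_inv, MulAction.mem_stabilizer_iff, ← himage, h]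
  · rintro ⟨U, rfl, hU⟩
    refine ⟨U.isUnit, ?_⟩
    rw [himage, ← MulAction.mem_stabilizer_iff, toConjAct_inv]
    exact inv_mem hU

end Stabilizer

namespace Paramodular

variable {p n}

lemma one_lt_prime_cast : (1 : ℝ) < p := by exact_mod_cast (Fact.out : p.Prime).one_lt

lemma prime_cast_pos : (0 : ℝ) < p := zero_lt_one.trans one_lt_prime_cast

lemma zpow_prime_cast_pos (t : ℤ) : (0 : ℝ) < (p : ℝ) ^ t := zpow_pos prime_cast_pos t

lemma zpow_prime_cast_le_zpow_iff {A B : ℤ} : (p : ℝ) ^ A ≤ (p : ℝ) ^ B ↔ A ≤ B :=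
  zpow_le_zpow_iff_right₀ one_lt_prime_cast

lemma prime_cast_ne_zero : (p : ℚ_[p]) ≠ 0 := by exact_mod_cast (Fact.out : p.Prime).ne_zero

section WeightBounded

variable {ι κ ν : Type*}

/-- Right multiplication by `a` maps `{v | ∀ i, ‖v i‖ ≤ p ^ r i}` into
`{v | ∀ j, ‖v j‖ ≤ p ^ s j}`; so `weightOrder p w` is the maximal order of endomorphisms of the
lattice `{v | ∀ i, ‖v i‖ ≤ p ^ w i}`. -/
def WeightBounded (a : Matrix ι κ ℚ_[p]) (r : ι → ℤ) (s : κ → ℤ) : Prop :=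
  ∀ i j, ‖a i j‖ ≤ (p : ℝ) ^ (s j - r i)

variable (p) in
def weightOrder (w : ι → ℤ) : Set (Matrix ι ι ℚ_[p]) := {m | WeightBounded m w w}

variable {a : Matrix ι κ ℚ_[p]} {r r' : ι → ℤ} {s s' : κ → ℤ}

lemma WeightBounded.mono (h : WeightBounded a r s) (hrs : ∀ i j, s j - r i ≤ s' j - r' i) :
    WeightBounded a r' s' :=
  fun i j => (h i j).trans (zpow_prime_cast_le_zpow_iff.2 (hrs i j))

lemma WeightBounded.add_const (h : WeightBounded a r s) (t : ℤ) :
    WeightBounded a (fun i => r i + t) (fun j => s j + t) :=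
  h.mono fun i j => by omega

lemma WeightBounded.mul [Fintype κ] {b : Matrix κ ν ℚ_[p]} {t : ν → ℤ}
    (ha : WeightBounded a r s) (hb : WeightBounded b s t) : WeightBounded (a * b) r t := by
  intro i j
  refine IsUltrametricDist.norm_sum_le_of_forall_le_of_nonneg (zpow_prime_cast_pos _).le
    fun m _ => ?_
  calc ‖a i m * b m j‖ = ‖a i m‖ * ‖b m j‖ := norm_mul _ _
    _ ≤ (p : ℝ) ^ (s m - r i) * (p : ℝ) ^ (t j - s m) :=
      mul_le_mul (ha i m) (hb m j) (norm_nonneg _) (zpow_prime_cast_pos _).le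
    _ = (p : ℝ) ^ (t j - r i) := by rw [← zpow_add₀ prime_cast_pos.ne']; ring_nf

lemma weightBounded_zpow_smul_iff {t : ℤ} :
    WeightBounded (((p : ℚ_[p]) ^ t) • a) r s ↔ WeightBounded a r fun j => s j + t := by
  refine forall₂_congr fun i j => ?_
  rw [Matrix.smul_apply, smul_eq_mul, norm_mul, Padic.norm_p_zpow, zpow_neg,
    inv_mul_le_iff₀ (zpow_prime_cast_pos _), ← zpow_add₀ prime_cast_pos.ne']
  ring_nf

lemma weightOrder_mul_mem [Fintype ι] {w : ι → ℤ} {a b : Matrix ι ι ℚ_[p]}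
    (ha : a ∈ weightOrder p w) (hb : b ∈ weightOrder p w) : a * b ∈ weightOrder p w :=
  WeightBounded.mul ha hb

end WeightBounded

section RowWeight

variable {ι κ : Type*} {a : Matrix ι κ ℚ_[p]} {w w' : κ → ℤ} {k k' : ι → ℤ}

/-- `k i = min_j (v(a i j) + w j)`, the largest `k` with `WeightBounded a k w`. -/
def IsRowWeight (a : Matrix ι κ ℚ_[p]) (w : κ → ℤ) (k : ι → ℤ) : Prop :=
  WeightBounded a k w ∧ ∀ i, ∃ j, ‖a i j‖ = (p : ℝ) ^ (w j - k i)

lemma exists_isRowWeight [Fintype κ] (ha : ∀ i, ∃ j, a i j ≠ 0) (w : κ → ℤ) :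
    ∃ k, IsRowWeight a w k := by
  have hmax (i : ι) : ∃ j, a i j ≠ 0 ∧
      ∀ l, ‖a i l‖ * (p : ℝ) ^ (-w l) ≤ ‖a i j‖ * (p : ℝ) ^ (-w j) := by
    obtain ⟨j₀, hj₀⟩ := ha i
    obtain ⟨j, -, hj⟩ := Finset.exists_max_image Finset.univ
      (fun l => ‖a i l‖ * (p : ℝ) ^ (-w l)) ⟨j₀, Finset.mem_univ _⟩
    refine ⟨j, fun h => ?_, fun l => hj l (Finset.mem_univ _)⟩
    have := hj j₀ (Finset.mem_univ _)
    rw [h, norm_zero, zero_mul] at this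
    exact (mul_pos (norm_pos_iff.2 hj₀) (zpow_prime_cast_pos _)).not_ge this
  choose j hj hle using hmax
  refine ⟨fun i => (a i (j i)).valuation + w (j i), fun i l => ?_, fun i => ⟨j i, ?_⟩⟩
  · have h := hle i l
    rw [Padic.norm_eq_zpow_neg_valuation (hj i), ← zpow_add₀ prime_cast_pos.ne',
      ← le_div_iff₀ (zpow_prime_cast_pos _), ← zpow_sub₀ prime_cast_pos.ne'] at h
    exact h.trans_eq (congrArg _ (by ring))
  · rw [Padic.norm_eq_zpow_neg_valuation (hj i)]
    exact congrArg _ (by ring)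

lemma IsRowWeight.le (h : IsRowWeight a w k) (h' : IsRowWeight a w' k')
    (hw : ∀ j, w j ≤ w' j) (i : ι) : k i ≤ k' i := by
  obtain ⟨j, hj⟩ := h'.2 i
  have := zpow_prime_cast_le_zpow_iff.1 (hj ▸ h.1 i j)
  linarith [hw j]

lemma IsRowWeight.add_const (h : IsRowWeight a w k) (t : ℤ) :
    IsRowWeight a (fun j => w j + t) (fun i => k i + t) := by
  simp only [IsRowWeight, WeightBounded, add_sub_add_right_eq_sub]
  exact h

lemma IsRowWeight.min (h : IsRowWeight a w k) (h' : IsRowWeight a w' k') :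
    IsRowWeight a (fun j => min (w j) (w' j)) (fun i => min (k i) (k' i)) := by
  refine ⟨fun i j => ?_, fun i => ?_⟩ <;> dsimp only
  · rcases (by omega : w j - k i ≤ Min.min (w j) (w' j) - Min.min (k i) (k' i) ∨
        w' j - k' i ≤ Min.min (w j) (w' j) - Min.min (k i) (k' i)) with hle | hle
    · exact (h.1 i j).trans (zpow_prime_cast_le_zpow_iff.2 hle)
    · exact (h'.1 i j).trans (zpow_prime_cast_le_zpow_iff.2 hle)
  · rcases le_total (k i) (k' i) with hk | hk
    · obtain ⟨j, hj⟩ := h.2 i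
      have := zpow_prime_cast_le_zpow_iff.1 (hj ▸ h'.1 i j)
      exact ⟨j, hj.trans (congrArg _ (by omega))⟩
    · obtain ⟨j, hj⟩ := h'.2 i
      have := zpow_prime_cast_le_zpow_iff.1 (hj ▸ h.1 i j)
      exact ⟨j, hj.trans (congrArg _ (by omega))⟩

lemma weightBounded_of_isRowWeight [Fintype ι] [DecidableEq ι] {b : Matrix κ ι ℚ_[p]}
    (hk : IsRowWeight a w k)
    (hb : ∀ j : ι, b * Matrix.single j j (1 : ℚ_[p]) * a ∈ weightOrder p w) :
    WeightBounded b w k := by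
  intro i j
  obtain ⟨m, hm⟩ := hk.2 j
  have h := hb j i m
  rw [Matrix.mul_assoc, Matrix.mul_apply, Finset.sum_eq_single j
      (fun l _ hl => by rw [Matrix.single_mul_apply_of_ne _ _ _ _ _ hl, mul_zero]) (by simp),
    Matrix.single_mul_apply_same, one_mul, norm_mul, hm, ← le_div_iff₀ (zpow_prime_cast_pos _),
    ← zpow_sub₀ prime_cast_pos.ne'] at h
  exact h.trans_eq (congrArg _ (by ring))

end RowWeight

section Determinant

variable {ι : Type*} [Fintype ι] [DecidableEq ι] {a b : Matrix ι ι ℚ_[p]}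

lemma norm_det_le {r s : ι → ℤ} (h : WeightBounded a r s) :
    ‖a.det‖ ≤ (p : ℝ) ^ (∑ j, s j - ∑ i, r i) := by
  rw [Matrix.det_apply']
  refine IsUltrametricDist.norm_sum_le_of_forall_le_of_nonneg (zpow_prime_cast_pos _).le
    fun σ _ => ?_
  have hsign : ‖((Equiv.Perm.sign σ : ℤ) : ℚ_[p])‖ = 1 := by
    rcases Int.units_eq_one_or (Equiv.Perm.sign σ) with h | h <;> simp [h]
  calc ‖((Equiv.Perm.sign σ : ℤ) : ℚ_[p]) * ∏ i, a (σ i) i‖ = ∏ i, ‖a (σ i) i‖ := by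
        rw [norm_mul, hsign, one_mul, norm_prod]
    _ ≤ ∏ i, (p : ℝ) ^ (s i - r (σ i)) :=
        Finset.prod_le_prod (fun _ _ => norm_nonneg _) fun i _ => h (σ i) i
    _ = (p : ℝ) ^ (∑ j, s j - ∑ i, r i) := by
        rw [prod_zpow_eq_zpow_sum₀ prime_cast_pos.ne', Finset.sum_sub_distrib,
          Equiv.sum_comp σ r]

lemma norm_det_eq {r s : ι → ℤ} (ha : WeightBounded a r s) (hb : WeightBounded b s r)
    (hab : a * b = 1) : ‖a.det‖ = (p : ℝ) ^ (∑ j, s j - ∑ i, r i) := by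
  refine (norm_det_le ha).antisymm ?_
  have hprod : ‖a.det‖ * ‖b.det‖ = 1 := by
    rw [← norm_mul, ← Matrix.det_mul, hab, Matrix.det_one, norm_one]
  have hb_pos : 0 < ‖b.det‖ := (norm_nonneg _).lt_of_ne fun h => by simp [← h] at hprod
  rw [eq_inv_of_mul_eq_one_left hprod, ← neg_sub, zpow_neg]
  exact inv_anti₀ hb_pos (norm_det_le hb)

lemma sum_sub_sum_eq_of_weightBounded (hab : a * b = 1) {w w' k k' : ι → ℤ}
    (ha : WeightBounded a k w) (hb : WeightBounded b w k)
    (ha' : WeightBounded a k' w') (hb' : WeightBounded b w' k') :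
    ∑ i, w i - ∑ i, k i = ∑ i, w' i - ∑ i, k' i :=
  zpow_right_injective₀ prime_cast_pos one_lt_prime_cast.ne'
    ((norm_det_eq ha hb hab).symm.trans (norm_det_eq ha' hb' hab))

end Determinant

section ParaWeight

def paraWeight₁ (n : ℕ) : Fin 4 → ℤ := ![0, -(n : ℤ), 0, 0]

def paraWeight₂ (n : ℕ) : Fin 4 → ℤ := ![0, 0, 0, (n : ℤ)]

lemma paraExp_eq_max (i j : Fin 4) : paraExp n i j =
    max (paraWeight₁ n i - paraWeight₁ n j) (paraWeight₂ n i - paraWeight₂ n j) := by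
  fin_cases i <;> fin_cases j <;> simp [paraExp, paraWeight₁, paraWeight₂]

lemma paraOrder_eq_inter :
    paraOrder p n = weightOrder p (paraWeight₁ n) ∩ weightOrder p (paraWeight₂ n) := by
  ext m
  simp only [paraOrder, weightOrder, WeightBounded, Set.mem_inter_iff, Set.mem_ofPred_eq,
    ← forall_and]
  refine forall₂_congr fun i j => ?_
  rw [paraExp_eq_max, ← min_neg_neg,
    (zpow_right_strictMono₀ one_lt_prime_cast).monotone.map_min, le_min_iff, neg_sub, neg_sub]

lemma zpow_smul_mem_paraOrder_iff {a : Matrix (Fin 4) (Fin 4) ℚ_[p]} {t : ℤ} :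
    ((p : ℚ_[p]) ^ t) • a ∈ paraOrder p n ↔
      WeightBounded a (paraWeight₁ n) (fun j => paraWeight₁ n j + t) ∧
        WeightBounded a (paraWeight₂ n) (fun j => paraWeight₂ n j + t) := by
  rw [paraOrder_eq_inter]
  exact and_congr weightBounded_zpow_smul_iff weightBounded_zpow_smul_iff

lemma paraOrder_mul_mem {a b : Matrix (Fin 4) (Fin 4) ℚ_[p]} (ha : a ∈ paraOrder p n)
    (hb : b ∈ paraOrder p n) : a * b ∈ paraOrder p n := by
  rw [paraOrder_eq_inter] at *
  exact ⟨weightOrder_mul_mem ha.1 hb.1, weightOrder_mul_mem ha.2 hb.2⟩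

lemma single_mem_paraOrder (i j : Fin 4) {c : ℚ_[p]}
    (hc : ‖c‖ ≤ (p : ℝ) ^ (-paraExp n i j)) : Matrix.single i j c ∈ paraOrder p n := by
  intro k l
  by_cases h : i = k ∧ j = l
  · obtain ⟨rfl, rfl⟩ := h
    rwa [Matrix.single_apply_same]
  · rw [Matrix.single_apply_of_ne _ _ _ _ _ h, norm_zero]
    exact (zpow_prime_cast_pos _).le

lemma paraOrder_subset_weightOrder_iff {w : Fin 4 → ℤ} : paraOrder p n ⊆ weightOrder p w ↔
    w 2 = w 0 ∧ w 1 ≤ w 0 ∧ w 0 ≤ w 1 + n ∧ w 3 = w 1 + n := by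
  have hsub : paraOrder p n ⊆ weightOrder p w ↔ ∀ i j, w i - w j ≤ paraExp n i j := by
    refine ⟨fun h i j => ?_, fun h m hm i j => (hm i j).trans ?_⟩
    · have := h (single_mem_paraOrder i j (Padic.norm_p_zpow (paraExp n i j)).le) i j
      rw [Matrix.single_apply_same, Padic.norm_p_zpow, zpow_prime_cast_le_zpow_iff] at this
      omega
    · exact zpow_prime_cast_le_zpow_iff.2 (by linarith [h i j])
  rw [hsub]
  refine ⟨fun h => ?_, fun h i j => ?_⟩
  · have h₀₂ : w 0 - w 2 ≤ 0 := by simpa [paraExp] using h 0 2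
    have h₂₀ : w 2 - w 0 ≤ 0 := by simpa [paraExp] using h 2 0
    have h₁₀ : w 1 - w 0 ≤ 0 := by simpa [paraExp] using h 1 0
    have h₀₁ : w 0 - w 1 ≤ n := by simpa [paraExp] using h 0 1
    have h₁₃ : w 1 - w 3 ≤ -n := by simpa [paraExp] using h 1 3
    have h₃₁ : w 3 - w 1 ≤ n := by simpa [paraExp] using h 3 1
    omega
  · fin_cases i <;> fin_cases j <;> simp [paraExp] <;> omega

/-- Write `k' - k = (α, β, α, β)`. The first sum condition (covolumes of `L_k ⊆ L_k'`) gives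
`α + β = n`, the second (covolume of `L_k' ∩ p⁻¹L_k`) gives `min α 1 + min β 1 = min n 1`; hence
`α = 0` or `β = 0`. -/
lemma exists_eq_paraWeight {k k' : Fin 4 → ℤ} (hk : paraOrder p n ⊆ weightOrder p k)
    (hk' : paraOrder p n ⊆ weightOrder p k') (hle : ∀ i, k i ≤ k' i)
    (hle' : ∀ i, k' i ≤ k i + n)
    (hsum : ∑ i, paraWeight₁ n i - ∑ i, k i = ∑ i, paraWeight₂ n i - ∑ i, k' i)
    (hsum' : ∑ i, paraWeight₁ n i - ∑ i, k i =
      ∑ i, min (paraWeight₂ n i) (paraWeight₁ n i + 1) - ∑ i, min (k' i) (k i + 1)) :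
    ∃ x : ℤ, (k = fun i => paraWeight₁ n i + x) ∧ (k' = fun i => paraWeight₂ n i + x) ∨
      (k = fun i => paraWeight₂ n i + x) ∧ (k' = fun i => paraWeight₁ n i + n + x) := by
  rw [paraOrder_subset_weightOrder_iff] at hk hk'
  simp only [Fin.sum_univ_four, paraWeight₁, paraWeight₂, Fin.isValue, Matrix.cons_val_zero,
    Matrix.cons_val_one, Matrix.cons_val, zero_add, add_zero] at hsum hsum'
  have := hle 0; have := hle 1; have := hle' 0; have := hle' 1
  refine ⟨k 0, ?_⟩
  by_cases h : k' 0 = k 0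
  · left
    constructor <;> funext i <;> fin_cases i <;> simp [paraWeight₁, paraWeight₂] <;> omega
  · right
    constructor <;> funext i <;> fin_cases i <;> simp [paraWeight₁, paraWeight₂] <;> omega

end ParaWeight

section WMat

lemma WMat_mul_self : WMat p n * WMat p n = ((p : ℚ_[p]) ^ n) • 1 := by
  ext i j
  fin_cases i <;> fin_cases j <;> simp [WMat, Matrix.mul_apply, Fin.sum_univ_four]

lemma weightBounded_WMat_paraWeight₂ :
    WeightBounded (WMat p n) (paraWeight₂ n) (paraWeight₁ n) := by
  intro i j
  fin_cases i <;> fin_cases j <;> simp [WMat, paraWeight₁, paraWeight₂, zpow_nonneg]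

lemma weightBounded_WMat_paraWeight₁ :
    WeightBounded (WMat p n) (fun i => paraWeight₁ n i + n) (paraWeight₂ n) := by
  intro i j
  fin_cases i <;> fin_cases j <;> simp [WMat, paraWeight₁, paraWeight₂]

lemma WMat_conj_mem {x : Matrix (Fin 4) (Fin 4) ℚ_[p]} (hx : x ∈ paraOrder p n) :
    ((p : ℚ_[p]) ^ (-(n : ℤ))) • (WMat p n * x * WMat p n) ∈ paraOrder p n := by
  rw [paraOrder_eq_inter] at hx
  refine zpow_smul_mem_paraOrder_iff.2 ⟨?_, ?_⟩
  · exact ((weightBounded_WMat_paraWeight₁.mul hx.2).mul weightBounded_WMat_paraWeight₂).mono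
      fun i j => by omega
  · exact (((weightBounded_WMat_paraWeight₂.add_const n).mul (hx.1.add_const n)).mul
      weightBounded_WMat_paraWeight₁).mono fun i j => by omega

variable (p n) in
noncomputable def WMatUnit : (Matrix (Fin 4) (Fin 4) ℚ_[p])ˣ where
  val := WMat p n
  inv := ((p : ℚ_[p]) ^ (-(n : ℤ))) • WMat p n
  val_inv := by
    rw [Matrix.mul_smul, WMat_mul_self, smul_smul, ← zpow_natCast,
      ← zpow_add₀ prime_cast_ne_zero, neg_add_cancel, zpow_zero, one_smul]
  inv_val := by
    rw [Matrix.smul_mul, WMat_mul_self, smul_smul, ← zpow_natCast,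
      ← zpow_add₀ prime_cast_ne_zero, neg_add_cancel, zpow_zero, one_smul]

end WMat

section Normaliser

variable {a b : Matrix (Fin 4) (Fin 4) ℚ_[p]}

lemma weightBounded_of_conj_subset (hconj : ∀ x ∈ paraOrder p n, b * x * a ∈ paraOrder p n)
    {w k : Fin 4 → ℤ} (hw : paraOrder p n ⊆ weightOrder p w) (hk : IsRowWeight a w k) :
    WeightBounded b w k :=
  weightBounded_of_isRowWeight hk fun j =>
    hw (hconj _ (single_mem_paraOrder j j (by simp [paraExp_eq_max])))

lemma paraOrder_subset_of_conj_subset (hab : a * b = 1)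
    (hconj : ∀ x ∈ paraOrder p n, b * x * a ∈ paraOrder p n) {w k : Fin 4 → ℤ}
    (hw : paraOrder p n ⊆ weightOrder p w) (hk : IsRowWeight a w k) :
    paraOrder p n ⊆ weightOrder p k := fun x hx => by
  have h := (hk.1.mul (hw (hconj x hx))).mul (weightBounded_of_conj_subset hconj hw hk)
  rwa [← Matrix.mul_assoc, ← Matrix.mul_assoc, hab, Matrix.one_mul, Matrix.mul_assoc, hab,
    Matrix.mul_one] at h

lemma exists_paraWeight_bounds (hab : a * b = 1)
    (hconj : ∀ x ∈ paraOrder p n, b * x * a ∈ paraOrder p n) :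
    ∃ x : ℤ,
      (WeightBounded a (fun i => paraWeight₁ n i + x) (paraWeight₁ n) ∧
        WeightBounded a (fun i => paraWeight₂ n i + x) (paraWeight₂ n) ∧
        WeightBounded b (paraWeight₁ n) (fun j => paraWeight₁ n j + x) ∧
        WeightBounded b (paraWeight₂ n) (fun j => paraWeight₂ n j + x)) ∨
      (WeightBounded a (fun i => paraWeight₂ n i + x) (paraWeight₁ n) ∧
        WeightBounded a (fun i => paraWeight₁ n i + n + x) (paraWeight₂ n) ∧
        WeightBounded b (paraWeight₁ n) (fun j => paraWeight₂ n j + x) ∧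
        WeightBounded b (paraWeight₂ n) (fun j => paraWeight₁ n j + n + x)) := by
  have hrow (i : Fin 4) : ∃ j, a i j ≠ 0 := by
    by_contra! h
    have := congrArg Matrix.det hab
    rw [Matrix.det_mul, Matrix.det_eq_zero_of_row_eq_zero i h, zero_mul, Matrix.det_one] at this
    exact zero_ne_one this
  have hR₁ : paraOrder p n ⊆ weightOrder p (paraWeight₁ n) :=
    paraOrder_eq_inter (p := p) ▸ Set.inter_subset_left
  have hR₂ : paraOrder p n ⊆ weightOrder p (paraWeight₂ n) :=
    paraOrder_eq_inter (p := p) ▸ Set.inter_subset_right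
  have hR₃ : paraOrder p n ⊆
      weightOrder p fun i => min (paraWeight₂ n i) (paraWeight₁ n i + 1) :=
    paraOrder_subset_weightOrder_iff.2 (by simp [paraWeight₁, paraWeight₂]; omega)
  obtain ⟨k, hk⟩ := exists_isRowWeight hrow (paraWeight₁ n)
  obtain ⟨k', hk'⟩ := exists_isRowWeight hrow (paraWeight₂ n)
  have hk'' := hk'.min (hk.add_const 1)
  have hb := weightBounded_of_conj_subset hconj hR₁ hk
  have hb' := weightBounded_of_conj_subset hconj hR₂ hk'
  obtain ⟨x, h⟩ := exists_eq_paraWeight (paraOrder_subset_of_conj_subset hab hconj hR₁ hk)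
    (paraOrder_subset_of_conj_subset hab hconj hR₂ hk')
    (hk.le hk' fun j => by fin_cases j <;> simp [paraWeight₁, paraWeight₂])
    (hk'.le (hk.add_const n) fun j => by fin_cases j <;> simp [paraWeight₁, paraWeight₂])
    (sum_sub_sum_eq_of_weightBounded hab hk.1 hb hk'.1 hb')
    (sum_sub_sum_eq_of_weightBounded hab hk.1 hb hk''.1
      (weightBounded_of_conj_subset hconj hR₃ hk''))
  refine ⟨x, h.imp ?_ ?_⟩ <;> rintro ⟨rfl, rfl⟩ <;> exact ⟨hk.1, hk'.1, hb, hb'⟩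

theorem exists_eq_zpow_smul_of_conj_subset (hab : a * b = 1) (hba : b * a = 1)
    (hconj : ∀ x ∈ paraOrder p n, b * x * a ∈ paraOrder p n) :
    ∃ (k : ℤ) (μ : Fin 2) (u : Matrix (Fin 4) (Fin 4) ℚ_[p]), u ∈ paraOrder p n ∧
      (∃ v ∈ paraOrder p n, u * v = 1 ∧ v * u = 1) ∧
      a = ((p : ℚ_[p]) ^ k) • ((WMat p n) ^ (μ : ℕ) * u) := by
  have hp := prime_cast_ne_zero (p := p)
  obtain ⟨x, ⟨ha₁, ha₂, hb₁, hb₂⟩ | ⟨ha₁, ha₂, hb₁, hb₂⟩⟩ := exists_paraWeight_bounds hab hconj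
  · refine ⟨x, 0, ((p : ℚ_[p]) ^ (-x)) • a,
      zpow_smul_mem_paraOrder_iff.2 ⟨ha₁.mono fun i j => by omega, ha₂.mono fun i j => by omega⟩,
      ⟨((p : ℚ_[p]) ^ x) • b, zpow_smul_mem_paraOrder_iff.2 ⟨hb₁, hb₂⟩, ?_, ?_⟩, ?_⟩
    · rw [smul_mul_smul_comm, hab, ← zpow_add₀ hp, neg_add_cancel, zpow_zero, one_smul]
    · rw [smul_mul_smul_comm, hba, ← zpow_add₀ hp, add_neg_cancel, zpow_zero, one_smul]
    · rw [Fin.val_zero, pow_zero, Matrix.one_mul, smul_smul, ← zpow_add₀ hp, add_neg_cancel,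
        zpow_zero, one_smul]
  · have hscalar : (p : ℚ_[p]) ^ x * (p : ℚ_[p]) ^ (-(x + n)) * (p : ℚ_[p]) ^ n = 1 := by
      rw [← zpow_natCast, ← zpow_add₀ hp, ← zpow_add₀ hp, ← zpow_zero (p : ℚ_[p])]
      ring_nf
    refine ⟨x, 1, ((p : ℚ_[p]) ^ (-(x + n))) • (WMat p n * a),
      zpow_smul_mem_paraOrder_iff.2
        ⟨((weightBounded_WMat_paraWeight₁.add_const x).mul ha₁).mono fun i j => by omega,
          (((weightBounded_WMat_paraWeight₂.add_const n).add_const x).mul ha₂).mono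
            fun i j => by omega⟩,
      ⟨((p : ℚ_[p]) ^ x) • (b * WMat p n), zpow_smul_mem_paraOrder_iff.2
        ⟨hb₁.mul (weightBounded_WMat_paraWeight₂.add_const x),
          hb₂.mul (weightBounded_WMat_paraWeight₁.add_const x)⟩, ?_, ?_⟩, ?_⟩
    · rw [smul_mul_smul_comm, Matrix.mul_assoc, ← Matrix.mul_assoc a, hab, Matrix.one_mul,
        WMat_mul_self, smul_smul, mul_comm _ ((p : ℚ_[p]) ^ x), hscalar, one_smul]
    · rw [smul_mul_smul_comm, Matrix.mul_assoc, ← Matrix.mul_assoc (WMat p n), WMat_mul_self,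
        Matrix.smul_mul, Matrix.one_mul, Matrix.mul_smul, hba, smul_smul, hscalar, one_smul]
    · rw [Fin.val_one, pow_one, Matrix.mul_smul, ← Matrix.mul_assoc, WMat_mul_self,
        Matrix.smul_mul, Matrix.one_mul, smul_smul, smul_smul, hscalar, one_smul]

open Pointwise ConjAct

lemma toConjAct_WMatUnit_mem_stabilizer :
    toConjAct (WMatUnit p n) ∈ MulAction.stabilizer (ConjAct _) (paraOrder p n) :=
  toConjAct_mem_stabilizer_iff.2
    ⟨fun _ hx => by simpa [WMatUnit, Matrix.mul_smul] using WMat_conj_mem hx,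
      fun _ hx => by simpa [WMatUnit, Matrix.smul_mul] using WMat_conj_mem hx⟩

lemma toConjAct_mem_stabilizer_of_mem_paraOrder {U : (Matrix (Fin 4) (Fin 4) ℚ_[p])ˣ}
    (hu : ↑U ∈ paraOrder p n) (hv : ↑U⁻¹ ∈ paraOrder p n) :
    toConjAct U ∈ MulAction.stabilizer (ConjAct _) (paraOrder p n) :=
  toConjAct_mem_stabilizer_iff.2 ⟨fun _ hx => paraOrder_mul_mem (paraOrder_mul_mem hu hx) hv,
    fun _ hx => paraOrder_mul_mem (paraOrder_mul_mem hv hx) hu⟩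

end Normaliser

end Paramodular

open Paramodular

/-- The normaliser in `GL₄(ℚ_p)` of the paramodular order `R` of
level `pⁿ` equals `⋃_{μ∈{0,1}} p^ℤ · W_{pⁿ}^μ · R^×`. -/
theorem normaliser_of_paramodular_order :
    {g : Matrix (Fin 4) (Fin 4) ℚ_[p] | IsUnit g ∧
        (fun x => g⁻¹ * x * g) '' paraOrder p n = paraOrder p n}
    = {g : Matrix (Fin 4) (Fin 4) ℚ_[p] | ∃ (k : ℤ) (μ : Fin 2)
        (u : Matrix (Fin 4) (Fin 4) ℚ_[p]), u ∈ paraOrder p n ∧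
        (∃ v ∈ paraOrder p n, u * v = 1 ∧ v * u = 1) ∧
        g = ((p : ℚ_[p]) ^ k) • ((WMat p n) ^ (μ : ℕ) * u)} := by
  ext g
  refine isUnit_and_conj_image_eq_iff.trans ⟨?_, ?_⟩
  · rintro ⟨U, rfl, hU⟩
    exact exists_eq_zpow_smul_of_conj_subset U.mul_inv U.inv_mul
      (toConjAct_mem_stabilizer_iff.1 hU).2
  · rintro ⟨k, μ, u, hu, ⟨v, hv, huv, hvu⟩, rfl⟩
    let c : ℚ_[p]ˣ := Units.mk0 (p : ℚ_[p]) prime_cast_ne_zero ^ k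
    refine ⟨Units.map (algebraMap ℚ_[p] (Matrix (Fin 4) (Fin 4) ℚ_[p]) : ℚ_[p] →* _) c *
      WMatUnit p n ^ (μ : ℕ) * ⟨u, v, huv, hvu⟩, ?_, ?_⟩
    · simp only [Units.val_mul, Units.val_pow_eq_pow_val, Units.coe_map, MonoidHom.coe_coe,
        Algebra.algebraMap_eq_smul_one, c, Units.val_zpow_eq_zpow_val, Units.val_mk0]
      rw [mul_assoc, smul_one_mul]
      rfl
    · rw [map_mul, map_mul, map_pow]
      exact mul_mem (mul_mem (toConjAct_map_algebraMap_mem_stabilizer _ _)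
        (pow_mem toConjAct_WMatUnit_mem_stabilizer _))
        (toConjAct_mem_stabilizer_of_mem_paraOrder hu hv)
end

section
/- If A ∈ M₂(ℚ_p) lies in (1/pⁿ)ℤ_p·I₂ + M₂(ℤ_p) and det(A) ∈ ℤ_p, then A ∈ M₂(ℤ_p). Similarly, if A ∈ (1/pⁿ)ℤ_p·I₂ + [[ℤ_p, p^{−n}ℤ_p],[pⁿℤ_p, ℤ_p]] and det(A) ∈ ℤ_p, then A ∈ [[ℤ_p, p^{−n}ℤ_p],[pⁿℤ_p, ℤ_p]]. -/
/-!
Write `A = c • 1 + B`. If `‖c‖ > 1`, the ultrametric inequality gives `‖A i i‖ = ‖c‖`, so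
`‖A 0 0 * A 1 1‖ = ‖c‖² > 1`; but `A 0 0 * A 1 1 = det A + B 0 1 * B 1 0` has norm at most `1`,
because the off-diagonal bounds of both lattices multiply to `1`. Hence `‖c‖ ≤ 1`, and adding the
scalar matrix `c • 1` does not leave the lattice.
-/

open scoped Matrix

variable (p : ℕ) [Fact p.Prime] (n : ℕ)

/-- Exponent pattern for the lattice `[[ℤ_p, p^{−n}ℤ_p],[pⁿℤ_p, ℤ_p]]`. -/
def latExp (i j : Fin 2) : ℤ :=
  if i = 0 ∧ j = 1 then -(n : ℤ) else if i = 1 ∧ j = 0 then (n : ℤ) else 0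

open IsUltrametricDist

section Ultrametric

variable {K : Type*} [NormedField K] [IsUltrametricDist K]

theorem norm_add_eq_left_of_norm_le_one {c b : K} (hc : 1 < ‖c‖) (hb : ‖b‖ ≤ 1) :
    ‖c + b‖ = ‖c‖ := by
  rw [norm_add_eq_max_of_norm_ne_norm (by linarith), max_eq_left (by linarith)]

theorem norm_le_one_of_norm_det_smul_one_add_le_one {c : K} {B : Matrix (Fin 2) (Fin 2) K}
    (h00 : ‖B 0 0‖ ≤ 1) (h11 : ‖B 1 1‖ ≤ 1) (hoff : ‖B 0 1 * B 1 0‖ ≤ 1)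
    (hdet : ‖(c • 1 + B).det‖ ≤ 1) : ‖c‖ ≤ 1 := by
  by_contra! hc
  have hdiag : (c + B 0 0) * (c + B 1 1) = (c • 1 + B).det + B 0 1 * B 1 0 := by
    simp [Matrix.det_fin_two]
  have hsq : ‖c‖ * ‖c‖ ≤ 1 := calc
    ‖c‖ * ‖c‖ = ‖(c + B 0 0) * (c + B 1 1)‖ := by
      rw [norm_mul, norm_add_eq_left_of_norm_le_one hc h00, norm_add_eq_left_of_norm_le_one hc h11]
    _ ≤ 1 := hdiag ▸ (norm_add_le_max _ _).trans (max_le hdet hoff)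
  nlinarith

theorem norm_apply_le_of_norm_det_smul_one_add_le_one {c : K} {B : Matrix (Fin 2) (Fin 2) K}
    {w : Fin 2 → Fin 2 → ℝ} (hdiag : ∀ i, w i i = 1) (hoff : w 0 1 * w 1 0 ≤ 1)
    (hB : ∀ i j, ‖B i j‖ ≤ w i j) (hdet : ‖(c • 1 + B).det‖ ≤ 1) (i j : Fin 2) :
    ‖(c • 1 + B) i j‖ ≤ w i j := by
  have hB' : ∀ i, ‖B i i‖ ≤ 1 := fun i => hdiag i ▸ hB i i
  have hBoff : ‖B 0 1 * B 1 0‖ ≤ 1 := by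
    rw [norm_mul]
    exact (mul_le_mul (hB 0 1) (hB 1 0) (norm_nonneg _) ((norm_nonneg _).trans (hB 0 1))).trans hoff
  have hc := norm_le_one_of_norm_det_smul_one_add_le_one (hB' 0) (hB' 1) hBoff hdet
  rcases eq_or_ne i j with rfl | hij
  · simpa [hdiag] using (norm_add_le_max _ _).trans (max_le hc (hB' i))
  · simpa [hij] using hB i j

end Ultrametric

theorem latExp_self (i : Fin 2) : latExp n i i = 0 := by
  fin_cases i <;> simp [latExp]

theorem zpow_neg_latExp_mul_zpow_neg_latExp :
    (p : ℝ) ^ (-latExp n 0 1) * (p : ℝ) ^ (-latExp n 1 0) = 1 := by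
  simp [latExp]

/-- If `A ∈ (1/pⁿ)ℤ_p·I₂ + M₂(ℤ_p)` has integral determinant, then
`A ∈ M₂(ℤ_p)`.  Similarly, if `A ∈ (1/pⁿ)ℤ_p·I₂ + [[ℤ_p, p^{−n}ℤ_p],[pⁿℤ_p, ℤ_p]]` has
integral determinant, then `A ∈ [[ℤ_p, p^{−n}ℤ_p],[pⁿℤ_p, ℤ_p]]`. -/
theorem scalar_plus_integral_with_integral_det :
    (∀ (A B : Matrix (Fin 2) (Fin 2) ℚ_[p]) (c : ℚ_[p]),
        ‖c‖ ≤ (p : ℝ) ^ (n : ℤ) → (∀ i j, ‖B i j‖ ≤ 1) →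
        A = c • (1 : Matrix (Fin 2) (Fin 2) ℚ_[p]) + B →
        ‖A.det‖ ≤ 1 → ∀ i j, ‖A i j‖ ≤ 1)
    ∧ (∀ (A B : Matrix (Fin 2) (Fin 2) ℚ_[p]) (c : ℚ_[p]),
        ‖c‖ ≤ (p : ℝ) ^ (n : ℤ) → (∀ i j, ‖B i j‖ ≤ (p : ℝ) ^ (-(latExp n i j))) →
        A = c • (1 : Matrix (Fin 2) (Fin 2) ℚ_[p]) + B →
        ‖A.det‖ ≤ 1 → ∀ i j, ‖A i j‖ ≤ (p : ℝ) ^ (-(latExp n i j))) := by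
  constructor
  · rintro A B c - hB rfl hdet
    exact norm_apply_le_of_norm_det_smul_one_add_le_one (w := fun _ _ => 1)
      (fun _ => rfl) (mul_one 1).le hB hdet
  · rintro A B c - hB rfl hdet
    exact norm_apply_le_of_norm_det_smul_one_add_le_one
      (fun i => by simp [latExp_self]) (zpow_neg_latExp_mul_zpow_neg_latExp p n).le hB hdet
end

section
/- Let R be a complete discrete valuation ring (with 2 possibly non-invertible) and L a special R-lattice, i.e. an integral lattice of odd rank whose discriminant module L^∨/L is a cyclic R-module. Then L decomposes as an orthogonal sum L = A ⊥ Rw with A even unimodular and w ∈ L. -/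
/-!
Write `B` for the polar form of `Q` and `L^∨` for the dual lattice. It suffices to find `w ∈ L`
with `B(w,w) ≠ 0`, `B(w,L) ⊆ B(w,w) R` and `L^∨ ⊆ L + Kw`: then `L = A ⊕ Rw` with
`A = L ∩ w^⊥`, and since `L^∨∨ = L`, every `x ∈ KA` that is integral on `A` is integral on
`L^∨ ⊆ A + Kw`, hence lies in `A`.

If `L^∨ = L`, take `w` with `B(w,w)` a unit. It exists because an even unimodular lattice
(`B(x,x) ∈ 𝔪` for all `x`) has even rank: by Nakayama it contains `x, y` with `B(x,y) = 1`, and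
the plane `Rx + Ry` splits off orthogonally.

Otherwise `L^∨ = L + Rg` with `g ∉ L`. Then `B(g,g) ∉ R`, for otherwise `g ∈ L^∨∨ = L`;
so `B(g,g)⁻¹ ∈ R` and `w = g / B(g,g)` works.
-/

open Module Submodule IsLocalRing

namespace LinearMap.BilinForm

section Plane

variable {K V : Type*} [Field K] [AddCommGroup V] [Module K V] {B : LinearMap.BilinForm K V}
  {x y : V}

lemma mem_orthogonal_span_pair_iff {z : V} :
    z ∈ B.orthogonal (span K {x, y}) ↔ B x z = 0 ∧ B y z = 0 := by
  refine ⟨fun h => ⟨h x (subset_span (by simp)), h y (subset_span (by simp))⟩, ?_⟩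
  rintro ⟨hx, hy⟩ n hn
  obtain ⟨a, b, rfl⟩ := mem_span_pair.mp hn
  simp [hx, hy]

lemma eq_zero_of_orthogonal_smul_add_smul (hB : B.IsSymm) (hxy : B x y = 1)
    (hδ : B x x * B y y ≠ 1) {a b : K} (hx : B x (a • x + b • y) = 0)
    (hy : B y (a • x + b • y) = 0) : a = 0 ∧ b = 0 := by
  have hyx : B y x = 1 := (hB.eq y x).trans hxy
  simp only [map_add, map_smul, smul_eq_mul, hxy, hyx] at hx hy
  have ha : a * (B x x * B y y - 1) = 0 := by linear_combination B y y * hx - hy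
  have ha' : a = 0 := (mul_eq_zero.mp ha).resolve_right (sub_ne_zero.mpr hδ)
  exact ⟨ha', by simpa [ha'] using hx⟩

lemma finrank_span_pair (hB : B.IsSymm) (hxy : B x y = 1) (hδ : B x x * B y y ≠ 1) :
    finrank K (span K {x, y}) = 2 := by
  have hli : LinearIndependent K ![x, y] := LinearIndependent.pair_iff.mpr fun a b h =>
    eq_zero_of_orthogonal_smul_add_smul hB hxy hδ (by simp [h]) (by simp [h])
  have := finrank_span_eq_card hli
  rwa [Matrix.range_cons_cons_empty, Fintype.card_fin] at this

lemma span_pair_inf_orthogonal_eq_bot (hB : B.IsSymm) (hxy : B x y = 1)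
    (hδ : B x x * B y y ≠ 1) : span K {x, y} ⊓ B.orthogonal (span K {x, y}) = ⊥ := by
  refine eq_bot_iff.mpr fun z ⟨hz, hz'⟩ => ?_
  obtain ⟨a, b, rfl⟩ := mem_span_pair.mp hz
  obtain ⟨hzx, hzy⟩ := mem_orthogonal_span_pair_iff.mp hz'
  obtain ⟨rfl, rfl⟩ := eq_zero_of_orthogonal_smul_add_smul hB hxy hδ hzx hzy
  simp

end Plane

section Lattice

variable {R K V : Type*} [CommRing R] [Field K] [Algebra R K]
  [AddCommGroup V] [Module K V] [Module R V] [IsScalarTower R K V] {B : LinearMap.BilinForm K V}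
  {L : Submodule R V}

variable (B) in
def IsUnimodular (L : Submodule R V) : Prop :=
  ∀ x ∈ span K (L : Set V), x ∈ B.dualSubmodule L → x ∈ L

lemma exists_sub_smul_add_smul_mem_orthogonal (hB : B.IsSymm) {x y : V} (hxy : B x y = 1)
    {α β : R} (hα : B x x = algebraMap R K α) (hβ : B y y = algebraMap R K β)
    (hδ : IsUnit (α * β - 1)) {z : V} (hzx : B x z ∈ (1 : Submodule R K))
    (hzy : B y z ∈ (1 : Submodule R K)) :
    ∃ c d : R, z - (c • x + d • y) ∈ B.orthogonal (span K {x, y}) := by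
  obtain ⟨p, hp⟩ := mem_one.mp hzx
  obtain ⟨q, hq⟩ := mem_one.mp hzy
  obtain ⟨u, hu⟩ := hδ
  have hyx : B y x = 1 := (hB.eq y x).trans hxy
  -- `(c, d)` solves `[[α, 1], [1, β]] (c, d) = (p, q)`.
  refine ⟨(p * β - q) * ↑u⁻¹, (q * α - p) * ↑u⁻¹,
    mem_orthogonal_span_pair_iff.mpr ⟨?_, ?_⟩⟩
  · have : p - ((p * β - q) * ↑u⁻¹ * α + (q * α - p) * ↑u⁻¹) = 0 := by
      linear_combination (-p) * u.mul_inv + p * ↑u⁻¹ * hu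
    simp only [map_sub, map_add, map_smul_of_tower, Algebra.smul_def, hα, hxy, ← hp]
    simpa [← map_mul, ← map_add, ← map_sub] using congrArg (algebraMap R K) this
  · have : q - ((p * β - q) * ↑u⁻¹ + (q * α - p) * ↑u⁻¹ * β) = 0 := by
      linear_combination (-q) * u.mul_inv + q * ↑u⁻¹ * hu
    simp only [map_sub, map_add, map_smul_of_tower, Algebra.smul_def, hβ, hyx, ← hq]
    simpa [← map_mul, ← map_add, ← map_sub] using congrArg (algebraMap R K) this

lemma IsUnimodular.inf_orthogonal (hB : B.IsSymm) (hL : B.IsUnimodular L) {W : Submodule K V}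
    (hsplit : ∀ z ∈ L, ∃ m ∈ W, z - m ∈ L ⊓ (B.orthogonal W).restrictScalars R) :
    B.IsUnimodular (L ⊓ (B.orthogonal W).restrictScalars R) := by
  intro x hx hxA
  have hxW : x ∈ B.orthogonal W := span_le.mpr (fun a ha => ha.2) hx
  refine ⟨hL x (span_mono (fun a ha => ha.1) hx) fun z hz => ?_, hxW⟩
  obtain ⟨m, hm, hzm⟩ := hsplit z hz
  have hxz : B x z = B x (z - m) := by rw [map_sub, hB.eq x m, hxW m hm, sub_zero]
  exact hxz ▸ hxA _ hzm

lemma finrank_span_eq_add_finrank_span_inf_orthogonal [FiniteDimensional K V]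
    {W : Submodule K V} (hW : W ⊓ B.orthogonal W = ⊥) (hWL : W ≤ span K (L : Set V))
    (hsplit : ∀ z ∈ L, ∃ m ∈ W, z - m ∈ L ⊓ (B.orthogonal W).restrictScalars R) :
    finrank K (span K (L : Set V)) = finrank K W +
      finrank K (span K (↑(L ⊓ (B.orthogonal W).restrictScalars R) : Set V)) := by
  set A := L ⊓ (B.orthogonal W).restrictScalars R
  have hsup : W ⊔ span K (A : Set V) = span K (L : Set V) := by
    refine le_antisymm (sup_le hWL (span_mono fun a ha => ha.1)) (span_le.mpr fun z hz => ?_)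
    obtain ⟨m, hm, hzm⟩ := hsplit z hz
    rw [← add_sub_cancel m z]
    exact add_mem (mem_sup_left hm) (mem_sup_right (subset_span hzm))
  have hinf : W ⊓ span K (A : Set V) = ⊥ :=
    eq_bot_iff.mpr (hW ▸ inf_le_inf_left W (span_le.mpr fun a ha => ha.2))
  have := finrank_sup_add_finrank_inf_eq W (span K (A : Set V))
  rwa [hsup, hinf, finrank_bot, add_zero] at this

section DiscreteValuationRing

variable [IsDomain R] [IsDiscreteValuationRing R] [IsFractionRing R K] {ϖ : R}

lemma exists_mem_apply_eq_one (hϖ : Irreducible ϖ) {x : V} (hx : x ∈ B.dualSubmodule L)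
    (hx' : (algebraMap R K ϖ)⁻¹ • x ∉ B.dualSubmodule L) : ∃ y ∈ L, B x y = 1 := by
  by_contra! h
  refine hx' fun y hy => ?_
  obtain ⟨r, hr⟩ := mem_one.mp (hx y hy)
  have hr' : r ∈ maximalIdeal R := fun ⟨u, hu⟩ =>
    h _ (L.smul_mem (↑u⁻¹ : R) hy) (by
      rw [map_smul_of_tower, ← hr, ← hu, Algebra.smul_def, ← map_mul, Units.inv_mul, map_one])
  obtain ⟨s, rfl⟩ := Ideal.mem_span_singleton'.mp (hϖ.maximalIdeal_eq ▸ hr')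
  refine mem_one.mpr ⟨s, ?_⟩
  have hϖ0 : algebraMap R K ϖ ≠ 0 := by simpa using hϖ.ne_zero
  simp [← hr, map_mul]
  field_simp

lemma IsUnimodular.exists_apply_eq_one (hL : B.IsUnimodular L) (hint : L ≤ B.dualSubmodule L)
    (hfg : L.FG) (hne : L ≠ ⊥) : ∃ x ∈ L, ∃ y ∈ L, B x y = 1 := by
  obtain ⟨ϖ, hϖ⟩ := IsDiscreteValuationRing.exists_irreducible R
  by_contra! h
  refine hne (eq_bot_of_le_smul_of_le_jacobson_bot (maximalIdeal R) L hfg (fun x hx => ?_)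
    (jacobson_eq_maximalIdeal ⊥ bot_ne_top).ge)
  have hx' : (algebraMap R K ϖ)⁻¹ • x ∈ L := hL _ (smul_mem _ _ (subset_span hx)) <| by
    by_contra h'
    obtain ⟨y, hy, hxy⟩ := exists_mem_apply_eq_one hϖ (hint hx) h'
    exact h x hx y hy hxy
  have hϖ0 : algebraMap R K ϖ ≠ 0 := by simpa using hϖ.ne_zero
  rw [← one_smul K x, ← mul_inv_cancel₀ hϖ0, mul_smul, algebraMap_smul]
  exact smul_mem_smul (hϖ.maximalIdeal_eq ▸ Ideal.mem_span_singleton_self ϖ) hx'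

theorem IsUnimodular.exists_isUnit_apply_self [FiniteDimensional K V] (hB : B.IsSymm)
    (hL : B.IsUnimodular L) (hint : L ≤ B.dualSubmodule L) (hfg : L.FG)
    (hodd : Odd (finrank K (span K (L : Set V)))) :
    ∃ w ∈ L, ∃ u : Rˣ, B w w = algebraMap R K u := by
  induction hn : finrank K (span K (L : Set V)) using Nat.strong_induction_on generalizing L with
  | _ n ih =>
  by_contra! hno
  have hne : L ≠ ⊥ := by
    rintro rfl
    rw [bot_coe, span_zero_singleton, finrank_bot] at hodd
    exact Nat.not_odd_zero hodd
  obtain ⟨x, hx, y, hy, hxy⟩ := hL.exists_apply_eq_one hint hfg hne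
  obtain ⟨α, hα⟩ := mem_one.mp (hint hx x hx)
  obtain ⟨β, hβ⟩ := mem_one.mp (hint hy y hy)
  have hα' : α ∈ maximalIdeal R := fun ⟨u, hu⟩ => hno x hx u (hu ▸ hα.symm)
  have hδ : IsUnit (α * β - 1) := by
    simpa using (isUnit_one_sub_self_of_mem_nonunits _ (Ideal.mul_mem_right β _ hα')).neg
  have hδK : B x x * B y y ≠ 1 := by
    rw [← hα, ← hβ, ← map_mul, ne_eq, FaithfulSMul.algebraMap_eq_one_iff]
    exact sub_ne_zero.mp hδ.ne_zero
  have hsplit : ∀ z ∈ L, ∃ m ∈ span K {x, y},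
      z - m ∈ L ⊓ (B.orthogonal (span K {x, y})).restrictScalars R := by
    intro z hz
    obtain ⟨c, d, hcd⟩ := exists_sub_smul_add_smul_mem_orthogonal hB hxy hα.symm hβ.symm hδ
      (hint hx z hz) (hint hy z hz)
    refine ⟨c • x + d • y, ?_, sub_mem hz (add_mem (L.smul_mem c hx) (L.smul_mem d hy)),
      hcd⟩
    exact add_mem (smul_of_tower_mem _ c (subset_span (by simp)))
      (smul_of_tower_mem _ d (subset_span (by simp)))
  have hrank := finrank_span_eq_add_finrank_span_inf_orthogonal
    (span_pair_inf_orthogonal_eq_bot hB hxy hδK)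
    (span_le.mpr (Set.pair_subset (subset_span hx) (subset_span hy))) hsplit
  rw [finrank_span_pair hB hxy hδK] at hrank
  obtain ⟨w, hw, u, hu⟩ := ih _ (by omega) (hL.inf_orthogonal hB hsplit)
    (fun a ha a' ha' => hint ha.1 a' ha'.1) (hfg.of_le inf_le_left)
    (by obtain ⟨k, hk⟩ := hodd; exact ⟨k - 1, by omega⟩) rfl
  exact hno w hw.1 u hu

end DiscreteValuationRing

section Splitting

variable (B) in
/-- `L = (L ∩ w^⊥) ⊕ Rw`, the projection `z ↦ B(w,z)/B(w,w)` being integral on `L`, and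
`L^∨ ⊆ L + Kw`. -/
structure IsSplittingVector (L : Submodule R V) (w : V) : Prop where
  mem : w ∈ L
  apply_self_ne_zero : B w w ≠ 0
  inv_mul_apply_mem_one : ∀ z ∈ L, (B w w)⁻¹ * B w z ∈ (1 : Submodule R K)
  exists_sub_smul_mem : ∀ y ∈ B.dualSubmodule L, ∃ c : K, y - c • w ∈ L

variable {w : V}

lemma sub_smul_mem_inf_ker (hw : w ∈ L) (hww : B w w ≠ 0) {z : V} (hz : z ∈ L) {c : R}
    (hc : algebraMap R K c = (B w w)⁻¹ * B w z) :
    z - c • w ∈ L ⊓ (LinearMap.ker (B w)).restrictScalars R := by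
  refine ⟨sub_mem hz (L.smul_mem c hw), ?_⟩
  change B w (z - c • w) = 0
  rw [map_sub, map_smul_of_tower, Algebra.smul_def, hc]
  field_simp
  ring

lemma inf_ker_sup_span_singleton_eq (hw : w ∈ L) (hww : B w w ≠ 0)
    (hproj : ∀ z ∈ L, (B w w)⁻¹ * B w z ∈ (1 : Submodule R K)) :
    L ⊓ (LinearMap.ker (B w)).restrictScalars R ⊔ R ∙ w = L := by
  refine le_antisymm (sup_le inf_le_left ((span_singleton_le_iff_mem w L).mpr hw)) fun z hz => ?_
  obtain ⟨c, hc⟩ := mem_one.mp (hproj z hz)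
  rw [← sub_add_cancel z (c • w)]
  exact add_mem (mem_sup_left (sub_smul_mem_inf_ker hw hww hz hc))
    (mem_sup_right (smul_mem _ c (mem_span_singleton_self w)))

lemma disjoint_ker_span_singleton [FaithfulSMul R K] (hww : B w w ≠ 0) :
    Disjoint ((LinearMap.ker (B w)).restrictScalars R) (R ∙ w) := by
  rw [disjoint_def]
  intro z hz hzw
  obtain ⟨c, rfl⟩ := mem_span_singleton.mp hzw
  have : algebraMap R K c * B w w = 0 := by
    simpa [map_smul_of_tower, Algebra.smul_def] using hz
  rw [(FaithfulSMul.algebraMap_eq_zero_iff R K).mp ((mul_eq_zero.mp this).resolve_right hww),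
    zero_smul]

lemma IsSplittingVector.isUnimodular_inf_ker (hB : B.IsSymm) (hw : B.IsSplittingVector L w)
    (hLL : B.dualSubmodule (B.dualSubmodule L) ≤ L) :
    B.IsUnimodular (L ⊓ (LinearMap.ker (B w)).restrictScalars R) := by
  intro x hx hxA
  have hxw : B w x = 0 := (span_le (p := LinearMap.ker (B w)).mpr fun a ha => ha.2) hx
  refine ⟨hLL fun y hy => ?_, hxw⟩
  obtain ⟨c, hc⟩ := hw.exists_sub_smul_mem y hy
  obtain ⟨d, hd⟩ := mem_one.mp (hw.inv_mul_apply_mem_one _ hc)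
  have hxy : B x y = B x (y - c • w - d • w) := by
    simp [map_smul_of_tower, hB.eq x w, hxw]
  exact hxy ▸ hxA _ (sub_smul_mem_inf_ker hw.mem hw.apply_self_ne_zero hc hd)

lemma dualSubmodule_dualSubmodule_eq_self [IsDomain R] [IsPrincipalIdealRing R]
    [IsFractionRing R K] (hB : B.Nondegenerate) (hB' : B.IsSymm) (L : Submodule R V)
    [L.IsLattice K] : B.dualSubmodule (B.dualSubmodule L) = L := by
  let b := Free.chooseBasis R L
  have hL : span R (Set.range (b.extendOfIsLattice K)) = L := by
    have : ⇑(b.extendOfIsLattice K) = L.subtype ∘ b := funext (b.extendOfIsLattice_apply K)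
    rw [this, Set.range_comp, span_image, b.span_eq, Submodule.map_top, range_subtype]
  rw [← hL, dualSubmodule_dualSubmodule_of_basis B hB hB']

lemma exists_isSplittingVector_of_notMem [IsDomain R] [ValuationRing R] [IsFractionRing R K]
    (hLL : B.dualSubmodule (B.dualSubmodule L) = L) {g : V}
    (hg : g ∈ B.dualSubmodule L)
    (hgen : ∀ y ∈ B.dualSubmodule L, ∃ r : R, y - r • g ∈ L)
    (hgL : g ∉ L) :
    ∃ w, B.IsSplittingVector L w := by
  have hgy : ∀ y ∈ B.dualSubmodule L, ∃ r t : R,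
      B g y = algebraMap R K t + algebraMap R K r * B g g := by
    intro y hy
    obtain ⟨r, hr⟩ := hgen y hy
    obtain ⟨t, ht⟩ := mem_one.mp (hg _ hr)
    refine ⟨r, t, ?_⟩
    rw [ht, map_sub, map_smul_of_tower, Algebra.smul_def]
    ring
  have hγ : B g g ∉ (1 : Submodule R K) := by
    intro hγ
    obtain ⟨s, hs⟩ := mem_one.mp hγ
    refine hgL (hLL ▸ fun y hy => ?_)
    obtain ⟨r, t, h⟩ := hgy y hy
    exact mem_one.mpr ⟨t + r * s, by rw [h, map_add, map_mul, hs]⟩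
  have hγ0 : B g g ≠ 0 := fun h => hγ (h ▸ zero_mem _)
  obtain ⟨s, hs⟩ : IsLocalization.IsInteger R (B g g)⁻¹ :=
    (ValuationRing.isInteger_or_isInteger R (B g g)).resolve_left fun h => hγ (mem_one.mpr h)
  have hww : B ((B g g)⁻¹ • g) ((B g g)⁻¹ • g) = (B g g)⁻¹ := by
    simp only [map_smul, smul_apply, smul_eq_mul]
    field_simp
  refine ⟨(B g g)⁻¹ • g, hLL ▸ fun y hy => ?_, by rw [hww]; exact inv_ne_zero hγ0,
    fun z hz => ?_, fun y hy => ?_⟩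
  · obtain ⟨r, t, h⟩ := hgy y hy
    refine mem_one.mpr ⟨s * t + r, ?_⟩
    rw [map_smul, smul_apply, smul_eq_mul, h, map_add, map_mul, hs]
    field_simp
  · rw [hww, inv_inv, map_smul, smul_apply, smul_eq_mul, ← mul_assoc, mul_inv_cancel₀ hγ0,
      one_mul]
    exact hg z hz
  · obtain ⟨r, hr⟩ := hgen y hy
    refine ⟨algebraMap R K r * B g g, ?_⟩
    rwa [mul_smul, smul_inv_smul₀ hγ0, algebraMap_smul]

section DiscreteValuationRing

variable [IsDomain R] [IsDiscreteValuationRing R] [IsFractionRing R K]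

lemma exists_isSplittingVector_of_dualSubmodule_le [FiniteDimensional K V] (hB : B.IsSymm)
    (hfg : L.FG) (hint : L ≤ B.dualSubmodule L) (hL : B.dualSubmodule L ≤ L)
    (hodd : Odd (finrank K (span K (L : Set V)))) :
    ∃ w, B.IsSplittingVector L w := by
  obtain ⟨w, hw, u, hu⟩ :=
    IsUnimodular.exists_isUnit_apply_self hB (fun x _ hx => hL hx) hint hfg hodd
  refine ⟨w, hw, ?_, fun z hz => ?_, fun y hy => ⟨0, by simpa using hL hy⟩⟩
  · simp [hu]
  · obtain ⟨r, hr⟩ := mem_one.mp (hint hw z hz)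
    exact mem_one.mpr ⟨↑u⁻¹ * r, by rw [map_mul, hr, hu, map_units_inv]⟩

theorem exists_isSplittingVector [FiniteDimensional K V] (hB : B.Nondegenerate) (hB' : B.IsSymm)
    [L.IsLattice K] (hint : L ≤ B.dualSubmodule L) (hodd : Odd (finrank K V)) {g : V}
    (hg : g ∈ B.dualSubmodule L)
    (hgen : ∀ y ∈ B.dualSubmodule L, ∃ r : R, y - r • g ∈ L) :
    ∃ w, B.IsSplittingVector L w := by
  by_cases hgL : g ∈ L
  · refine exists_isSplittingVector_of_dualSubmodule_le hB' IsLattice.fg hint (fun y hy => ?_)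
      (by rwa [IsLattice.span_eq_top, finrank_top])
    obtain ⟨r, hr⟩ := hgen y hy
    simpa using add_mem hr (L.smul_mem r hgL)
  · exact exists_isSplittingVector_of_notMem (dualSubmodule_dualSubmodule_eq_self hB hB' L)
      hg hgen hgL

end DiscreteValuationRing

end Splitting

end Lattice

end LinearMap.BilinForm

namespace QuadraticMap

variable {R K V : Type*} [CommRing R] [Field K] [Algebra R K]
  [AddCommGroup V] [Module K V] [Module R V] [IsScalarTower R K V] {Q : QuadraticForm K V}
  {L : Submodule R V}

lemma mem_dualSubmodule_polarBilin_iff {x : V} :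
    x ∈ LinearMap.BilinForm.dualSubmodule (polarBilin Q) L ↔
      ∀ y ∈ L, ∃ r : R, polar Q x y = algebraMap R K r := by
  simp [LinearMap.BilinForm.mem_dualSubmodule, mem_one, eq_comm]

lemma le_dualSubmodule_polarBilin (hQ : ∀ x ∈ L, ∃ r : R, Q x = algebraMap R K r) :
    L ≤ LinearMap.BilinForm.dualSubmodule (polarBilin Q) L := by
  intro x hx
  refine mem_dualSubmodule_polarBilin_iff.mpr fun y hy => ?_
  obtain ⟨r, hr⟩ := hQ _ (L.add_mem hx hy)
  obtain ⟨s, hs⟩ := hQ x hx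
  obtain ⟨t, ht⟩ := hQ y hy
  exact ⟨r - s - t, by rw [polar, hr, hs, ht, map_sub, map_sub]⟩

end QuadraticMap

open LinearMap.BilinForm QuadraticMap

theorem special_lattice_decomposition_general
    {R : Type*} [CommRing R] [IsDomain R] [IsDiscreteValuationRing R]
    {K : Type*} [Field K] [Algebra R K] [IsFractionRing R K]
    {V : Type*} [AddCommGroup V] [Module K V] [Module R V] [IsScalarTower R K V]
    [FiniteDimensional K V]
    (Q : QuadraticForm K V)
    (hreg : ∀ x : V, (∀ y : V, QuadraticMap.polar Q x y = 0) → x = 0)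
    (hodd : Odd (Module.finrank K V))
    (L : Submodule R V) (hfg : L.FG)
    (hfull : Submodule.span K (L : Set V) = ⊤)
    (hint : ∀ x ∈ L, ∃ r : R, Q x = algebraMap R K r)
    -- `L^∨/L` is cyclic, where `L^∨ = {x : ∀ y ∈ L, ⟨x,y⟩ ∈ R}`:
    (hspecial : ∃ g : V,
      (∀ y ∈ L, ∃ r : R, QuadraticMap.polar Q g y = algebraMap R K r) ∧
      ∀ x : V, (∀ y ∈ L, ∃ r : R, QuadraticMap.polar Q x y = algebraMap R K r) →
        ∃ r : R, x - r • g ∈ L) :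
    ∃ (A : Submodule R V) (w : V), w ∈ L
      ∧ A ⊔ Submodule.span R ({w} : Set V) = L
      ∧ Disjoint A (Submodule.span R ({w} : Set V))
      ∧ (∀ a ∈ A, QuadraticMap.polar Q a w = 0)
      -- `A` is integral (hence even, as `⟨a,a⟩ = 2Q(a)`):
      ∧ (∀ a ∈ A, ∃ r : R, Q a = algebraMap R K r)
      -- `A` is unimodular: `A^∨ = A` inside `K·A`:
      ∧ (∀ x ∈ Submodule.span K (A : Set V),
          (∀ a ∈ A, ∃ r : R, QuadraticMap.polar Q x a = algebraMap R K r) → x ∈ A) := by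
  set B : LinearMap.BilinForm K V := polarBilin Q
  have hB : B.IsSymm := ⟨polar_comm Q⟩
  have hBnd : B.Nondegenerate :=
    hB.isRefl.nondegenerate_iff_separatingLeft.mpr fun x hx => hreg x (by simpa [B] using hx)
  have : L.IsLattice K := ⟨hfg, hfull⟩
  obtain ⟨g, hg, hgen⟩ := hspecial
  obtain ⟨w, hw⟩ := exists_isSplittingVector hBnd hB
    (le_dualSubmodule_polarBilin hint) hodd (mem_dualSubmodule_polarBilin_iff.mpr hg)
    fun y hy => hgen y (mem_dualSubmodule_polarBilin_iff.mp hy)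
  refine ⟨L ⊓ (LinearMap.ker (B w)).restrictScalars R, w, hw.mem,
    inf_ker_sup_span_singleton_eq hw.mem hw.apply_self_ne_zero hw.inv_mul_apply_mem_one,
    (disjoint_ker_span_singleton hw.apply_self_ne_zero).mono_left inf_le_right,
    fun a ha => (hB.eq a w).trans ha.2, fun a ha => hint a ha.1, fun x hx hxA => ?_⟩
  exact hw.isUnimodular_inf_ker hB (dualSubmodule_dualSubmodule_eq_self hBnd hB L).le x hx
    (mem_dualSubmodule_polarBilin_iff.mpr hxA)

/-- Let `R` be a complete discrete valuation ring (2 possibly not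
invertible), `K` its fraction field, and `L` a special `R`-lattice in a regular quadratic
space `(V,Q)` over `K`: `L` is a finitely generated `R`-lattice spanning `V`, integral
(`Q(L) ⊆ R`), of odd rank, whose discriminant module `L^∨/L` is cyclic.  Then
`L = A ⊥ Rw` with `A` even unimodular and `w ∈ L`. -/
theorem special_lattice_decomposition
    {R : Type*} [CommRing R] [IsDomain R] [IsDiscreteValuationRing R]
    [IsAdicComplete (IsLocalRing.maximalIdeal R) R]
    {K : Type*} [Field K] [Algebra R K] [IsFractionRing R K]
    {V : Type*} [AddCommGroup V] [Module K V] [Module R V] [IsScalarTower R K V]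
    [FiniteDimensional K V]
    (Q : QuadraticForm K V)
    (hreg : ∀ x : V, (∀ y : V, QuadraticMap.polar Q x y = 0) → x = 0)
    (hodd : Odd (Module.finrank K V))
    (L : Submodule R V) (hfg : L.FG)
    (hfull : Submodule.span K (L : Set V) = ⊤)
    (hint : ∀ x ∈ L, ∃ r : R, Q x = algebraMap R K r)
    -- `L^∨/L` is cyclic, where `L^∨ = {x : ∀ y ∈ L, ⟨x,y⟩ ∈ R}`:
    (hspecial : ∃ g : V,
      (∀ y ∈ L, ∃ r : R, QuadraticMap.polar Q g y = algebraMap R K r) ∧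
      ∀ x : V, (∀ y ∈ L, ∃ r : R, QuadraticMap.polar Q x y = algebraMap R K r) →
        ∃ r : R, x - r • g ∈ L) :
    ∃ (A : Submodule R V) (w : V), w ∈ L
      ∧ A ⊔ Submodule.span R ({w} : Set V) = L
      ∧ Disjoint A (Submodule.span R ({w} : Set V))
      ∧ (∀ a ∈ A, QuadraticMap.polar Q a w = 0)
      -- `A` is integral (hence even, as `⟨a,a⟩ = 2Q(a)`):
      ∧ (∀ a ∈ A, ∃ r : R, Q a = algebraMap R K r)
      -- `A` is unimodular: `A^∨ = A` inside `K·A`: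
      ∧ (∀ x ∈ Submodule.span K (A : Set V),
          (∀ a ∈ A, ∃ r : R, QuadraticMap.polar Q x a = algebraMap R K r) → x ∈ A) :=
  special_lattice_decomposition_general Q hreg hodd L hfg hfull hint hspecial
end
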